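/- arXiv:2601.08150 — 5 statements merged into one kernel-verified Lean document; each statement's English description precedes it below -/
import Mathlib

section
/- Let H be a finite directed multigraph equipped with a cyclic ample framing. Then any two distinct minimal directed cycles of H are edge-disjoint, and moreover they have at most one vertex in common. -/
namespace PaperDKK

/-- Edge colours for framings. -/
inductive Col : Type
  | red : Col
  | blue : Col
  deriving DecidableEq

variable {V E : Type*}

/-- The list of vertices visited by a walk. -/
def walkVerts (tl hd : E → V) : List E → List V
  | [] => []
  | e :: es => tl e :: (e :: es).map hd

/-- A walk: a nonempty list of consecutively composable edges. -/
def IsWalk (tl hd : E → V) (w : List E) : Prop :=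
  w ≠ [] ∧ List.Chain' (fun e f => hd e = tl f) w

/-- A source: a vertex that is the head of no edge. -/
def IsSource (tl hd : E → V) (v : V) : Prop := ∀ e : E, hd e ≠ v

/-- A sink: a vertex that is the tail of no edge. -/
def IsSink (tl hd : E → V) (v : V) : Prop := ∀ e : E, tl e ≠ v

/-- An internal vertex: neither a source nor a sink. -/
def IsInternal (tl hd : E → V) (v : V) : Prop :=
  ¬ IsSource tl hd v ∧ ¬ IsSink tl hd v

/-- A minimal directed cycle: a closed walk visiting no vertex twice. -/
def IsMinCycle (tl hd : E → V) (w : List E) : Prop :=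
  IsWalk tl hd w ∧
  (∀ e ∈ w.getLast?, ∀ f ∈ w.head?, hd e = tl f) ∧
  (w.map hd).Nodup

/-- A walk from a source to a sink. -/
def IsSrcSnkWalk (tl hd : E → V) (w : List E) : Prop :=
  IsWalk tl hd w ∧
  (∀ e ∈ w.head?, IsSource tl hd (tl e)) ∧
  (∀ e ∈ w.getLast?, IsSink tl hd (hd e))

/-- A route: a minimal directed cycle or a source-to-sink walk. -/
def IsRoute (tl hd : E → V) (w : List E) : Prop :=
  IsMinCycle tl hd w ∨ IsSrcSnkWalk tl hd w

/-- A good route: a source-to-sink walk none of whose contiguous subwalks is a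
minimal directed cycle. -/
def IsGoodRoute (tl hd : E → V) (w : List E) : Prop :=
  IsSrcSnkWalk tl hd w ∧ ∀ u : List E, u <:+: w → ¬ IsMinCycle tl hd u

/-- A monochromatic list of edges. -/
def Mono (col : E → Col) (w : List E) : Prop :=
  ∃ b : Col, ∀ e ∈ w, col e = b

/-- Cyclic ample framing: at every internal vertex there is exactly one red and
one blue incoming edge and exactly one red and one blue outgoing edge, and every
minimal directed cycle is monochromatic. -/
def CyclicAmpleFraming (tl hd : E → V) (col : E → Col) : Prop :=
  (∀ v : V, IsInternal tl hd v →
    (∃! e : E, hd e = v ∧ col e = Col.red) ∧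
    (∃! e : E, hd e = v ∧ col e = Col.blue) ∧
    (∃! e : E, tl e = v ∧ col e = Col.red) ∧
    (∃! e : E, tl e = v ∧ col e = Col.blue)) ∧
  (∀ w : List E, IsMinCycle tl hd w → Mono col w)

/-- Incompatibility of two source-to-sink walks: they admit decompositions
`P·S·Q` and `P′·S·Q′` along a common (possibly vertex-only) subwalk `S`, with
the last edge of `P` and the first edge of `Q′` blue while the first edge of
`Q` and the last edge of `P′` are red.  Here the `P`-part is `P ++ [p]` and the
`Q`-part is `q :: Q`, so `p` is the last edge of the `P`-part and `q` the first
edge of the `Q`-part. -/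
def Incompat (tl hd : E → V) (col : E → Col) (w w' : List E) : Prop :=
  IsSrcSnkWalk tl hd w ∧ IsSrcSnkWalk tl hd w' ∧
  ∃ (P S Q P' Q' : List E) (p q p' q' : E),
    ((w = P ++ p :: (S ++ q :: Q) ∧ w' = P' ++ p' :: (S ++ q' :: Q')) ∨
     (w' = P ++ p :: (S ++ q :: Q) ∧ w = P' ++ p' :: (S ++ q' :: Q'))) ∧
    hd p = hd p' ∧
    col p = Col.blue ∧ col q' = Col.blue ∧ col q = Col.red ∧ col p' = Col.red

/-- A route is exceptional if it is compatible with every route. -/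
def Exceptional (tl hd : E → V) (col : E → Col) (w : List E) : Prop :=
  IsRoute tl hd w ∧ ∀ w' : List E, IsRoute tl hd w' → ¬ Incompat tl hd col w w'

/-- Connectivity of the underlying undirected graph. -/
def Connected (tl hd : E → V) : Prop :=
  ∀ v w : V,
    Relation.ReflTransGen
      (fun x y => ∃ e : E, (tl e = x ∧ hd e = y) ∨ (tl e = y ∧ hd e = x)) v w

/-- Every source and every sink has degree one. -/
def DegreeOneEnds (tl hd : E → V) : Prop :=
  (∀ v : V, IsSource tl hd v → ∃! e : E, tl e = v) ∧
  (∀ v : V, IsSink tl hd v → ∃! e : E, hd e = v)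

/-- No idle edges: no edge between internal vertices is the unique outgoing edge
of its tail or the unique incoming edge of its head. -/
def NoIdleEdges (tl hd : E → V) : Prop :=
  ∀ e : E, IsInternal tl hd (tl e) → IsInternal tl hd (hd e) →
    (∃ f : E, f ≠ e ∧ tl f = tl e) ∧ (∃ f : E, f ≠ e ∧ hd f = hd e)


section Aux

variable {tl hd : E → V} {col : E → Col}

theorem IsMinCycle.ne_nil {w : List E} (h : IsMinCycle tl hd w) : w ≠ [] := h.1.1

theorem IsMinCycle.chain_idx {w : List E} (h : IsMinCycle tl hd w) {i : ℕ}
    (hi : i + 1 < w.length) : hd (w[i]'(by omega)) = tl (w[i+1]'hi) := by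
  have := List.isChain_iff_getElem.1 h.1.2 i (by omega)
  simpa using this

theorem IsMinCycle.closed_idx {w : List E} (h : IsMinCycle tl hd w) (h0 : 0 < w.length) :
    hd (w[w.length - 1]'(by omega)) = tl (w[0]'h0) := by
  have hne : w ≠ [] := h.1.1
  have h2 := h.2.1 (w.getLast hne) (by simp [List.getLast?_eq_getLast hne])
      (w.head hne) (by simp [List.head?_eq_head hne])
  rwa [List.getLast_eq_getElem, List.head_eq_getElem] at h2

theorem headIdxInj {w : List E} (h : IsMinCycle tl hd w) {i j : ℕ}
    (hi : i < w.length) (hj : j < w.length) (hij : hd (w[i]'hi) = hd (w[j]'hj)) : i = j := by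
  have h' : (w.map hd)[i]'(by simpa using hi) = (w.map hd)[j]'(by simpa using hj) := by
    simpa [List.getElem_map] using hij
  exact (h.2.2.getElem_inj_iff).1 h'

theorem IsMinCycle.rot {l₁ l₂ : List E} (h : IsMinCycle tl hd (l₁ ++ l₂)) :
    IsMinCycle tl hd (l₂ ++ l₁) := by
  rcases eq_or_ne l₁ [] with rfl | h₁
  · simpa using h
  rcases eq_or_ne l₂ [] with rfl | h₂
  · simpa using h
  obtain ⟨⟨hne, hch⟩, hcl, hnd⟩ := h
  have hch := List.isChain_append.1 hch
  obtain ⟨hc₁, hc₂, hj⟩ := hch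
  refine ⟨⟨by simp [h₂], List.isChain_append.2 ⟨hc₂, hc₁, fun x hx y hy => ?_⟩⟩,
    fun x hx y hy => ?_, ?_⟩
  · exact hcl x (by rwa [List.getLast?_append_of_ne_nil _ h₂])
      y (by rwa [List.head?_append_of_ne_nil _ h₁])
  · rw [List.getLast?_append_of_ne_nil _ h₁] at hx
    rw [List.head?_append_of_ne_nil _ h₂] at hy
    exact hj x hx y hy
  · rw [List.map_append] at hnd ⊢
    exact List.perm_append_comm.nodup_iff.mpr hnd

theorem exists_rot {w : List E} (h : IsMinCycle tl hd w) {u : V} (hu : u ∈ w.map hd) :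
    ∃ e t, IsMinCycle tl hd (e :: t) ∧ (e :: t) ~r w ∧ tl e = u := by
  obtain ⟨f, hf, hfu⟩ := List.mem_map.1 hu
  obtain ⟨a, b, rfl⟩ := List.append_of_mem hf
  cases b with
  | nil =>
    obtain ⟨e, t, het⟩ := List.exists_cons_of_ne_nil h.ne_nil
    refine ⟨e, t, het ▸ h, by rw [← het], ?_⟩
    have h2 := h.2.1 f (by simp [List.getLast?_concat]) e (by simp [het])
    rw [← hfu]
    exact h2.symm
  | cons g b' =>
    have hw : a ++ f :: g :: b' = (a ++ [f]) ++ g :: b' := by simp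
    have h' : IsMinCycle tl hd ((a ++ [f]) ++ g :: b') := hw ▸ h
    refine ⟨g, b' ++ (a ++ [f]), by simpa using h'.rot, ?_, ?_⟩
    · have hrot : (g :: b') ++ (a ++ [f]) ~r (a ++ [f]) ++ (g :: b') :=
        List.isRotated_append
      simpa using hrot
    · have hchain : List.Chain' (fun e f => hd e = tl f) (f :: g :: b') :=
        h.1.2.suffix ⟨a, rfl⟩
      have := (List.isChain_cons_cons.1 hchain).1
      rw [← hfu]
      exact this.symm

theorem IsMinCycle.exists_tail_eq {w : List E} (h : IsMinCycle tl hd w) {e : E}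
    (he : e ∈ w) : ∃ f ∈ w, tl f = hd e := by
  obtain ⟨i, hi, rfl⟩ := List.mem_iff_getElem.1 he
  by_cases h' : i + 1 < w.length
  · exact ⟨w[i+1], List.getElem_mem _, (h.chain_idx h').symm⟩
  · have hi' : i = w.length - 1 := by omega
    subst hi'
    exact ⟨w[0]'(by omega), List.getElem_mem _, (h.closed_idx (by omega)).symm⟩

theorem IsMinCycle.exists_head_eq {w : List E} (h : IsMinCycle tl hd w) {e : E}
    (he : e ∈ w) : ∃ f ∈ w, hd f = tl e := by
  obtain ⟨i, hi, rfl⟩ := List.mem_iff_getElem.1 he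
  rcases Nat.eq_zero_or_pos i with rfl | h'
  · exact ⟨w[w.length-1]'(by omega), List.getElem_mem _, h.closed_idx (by omega)⟩
  · refine ⟨w[i-1]'(by omega), List.getElem_mem _, ?_⟩
    have hch := h.chain_idx (i := i - 1) (by omega)
    have heq : i - 1 + 1 = i := by omega
    simpa [heq] using hch

theorem internal_head {w : List E} (h : IsMinCycle tl hd w) {e : E} (he : e ∈ w) :
    IsInternal tl hd (hd e) := by
  refine ⟨fun hs => hs e rfl, fun hs => ?_⟩
  obtain ⟨f, -, hf⟩ := h.exists_tail_eq he
  exact hs f hf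

theorem internal_tail {w : List E} (h : IsMinCycle tl hd w) {e : E} (he : e ∈ w) :
    IsInternal tl hd (tl e) := by
  refine ⟨fun hs => ?_, fun hs => hs e rfl⟩
  obtain ⟨f, -, hf⟩ := h.exists_head_eq he
  exact hs f hf

theorem eq_of_head_eq (hfr : CyclicAmpleFraming tl hd col) {w₁ w₂ : List E}
    (h₁ : IsMinCycle tl hd w₁) (h₂ : IsMinCycle tl hd w₂) {e₁ e₂ : E}
    (he₁ : e₁ ∈ w₁) (he₂ : e₂ ∈ w₂) (hc : col e₁ = col e₂) (hh : hd e₁ = hd e₂) :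
    e₁ = e₂ := by
  obtain ⟨hr, hb, -, -⟩ := hfr.1 (hd e₁) (internal_head h₁ he₁)
  cases hcol : col e₁ with
  | red => exact hr.unique ⟨rfl, hcol⟩ ⟨hh.symm, by rw [← hc, hcol]⟩
  | blue => exact hb.unique ⟨rfl, hcol⟩ ⟨hh.symm, by rw [← hc, hcol]⟩

theorem eq_of_tail_eq (hfr : CyclicAmpleFraming tl hd col) {w₁ w₂ : List E}
    (h₁ : IsMinCycle tl hd w₁) (h₂ : IsMinCycle tl hd w₂) {e₁ e₂ : E}
    (he₁ : e₁ ∈ w₁) (he₂ : e₂ ∈ w₂) (hc : col e₁ = col e₂) (hh : tl e₁ = tl e₂) :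
    e₁ = e₂ := by
  obtain ⟨-, -, hr, hb⟩ := hfr.1 (tl e₁) (internal_tail h₁ he₁)
  cases hcol : col e₁ with
  | red => exact hr.unique ⟨rfl, hcol⟩ ⟨hh.symm, by rw [← hc, hcol]⟩
  | blue => exact hb.unique ⟨rfl, hcol⟩ ⟨hh.symm, by rw [← hc, hcol]⟩

theorem eq_of_same_start (hfr : CyclicAmpleFraming tl hd col) {w₁ w₂ : List E}
    (h₁ : IsMinCycle tl hd w₁) (h₂ : IsMinCycle tl hd w₂) {b : Col}
    (m₁ : ∀ e ∈ w₁, col e = b) (m₂ : ∀ e ∈ w₂, col e = b)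
    (hlen : w₁.length ≤ w₂.length) (hhead : w₁.head? = w₂.head?) : w₁ = w₂ := by
  have n₁pos : 0 < w₁.length := List.length_pos_iff.2 h₁.ne_nil
  have n₂pos : 0 < w₂.length := List.length_pos_iff.2 h₂.ne_nil
  have key : ∀ i, ∀ (hi₁ : i < w₁.length) (hi₂ : i < w₂.length), w₁[i] = w₂[i] := by
    intro i
    induction i with
    | zero =>
      intro hi₁ hi₂
      rw [List.head?_eq_head h₁.ne_nil, List.head?_eq_head h₂.ne_nil,
        List.head_eq_getElem, List.head_eq_getElem] at hhead
      exact Option.some.inj hhead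
    | succ i ih =>
      intro hi₁ hi₂
      have hprev := ih (by omega) (by omega)
      refine eq_of_tail_eq hfr h₁ h₂ (List.getElem_mem hi₁) (List.getElem_mem hi₂) ?_ ?_
      · rw [m₁ _ (List.getElem_mem hi₁), m₂ _ (List.getElem_mem hi₂)]
      · rw [← h₁.chain_idx hi₁, ← h₂.chain_idx hi₂, hprev]
  have hlen2 : w₁.length = w₂.length := by
    have e1 : hd (w₂[w₁.length - 1]'(by omega)) = hd (w₂[w₂.length - 1]'(by omega)) := by
      rw [← key (w₁.length - 1) (by omega) (by omega), h₁.closed_idx n₁pos,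
        key 0 n₁pos n₂pos, ← h₂.closed_idx n₂pos]
    have := headIdxInj h₂ (by omega) (by omega) e1
    omega
  exact List.ext_getElem hlen2 key

theorem rotated_of_common (hfr : CyclicAmpleFraming tl hd col) {c₁ c₂ : List E}
    (h₁ : IsMinCycle tl hd c₁) (h₂ : IsMinCycle tl hd c₂) {b : Col}
    (m₁ : ∀ e ∈ c₁, col e = b) (m₂ : ∀ e ∈ c₂, col e = b)
    {u : V} (hu₁ : u ∈ c₁.map hd) (hu₂ : u ∈ c₂.map hd) : c₁ ~r c₂ := by
  obtain ⟨f₁, t₁, hc₁, hr₁, hf₁⟩ := exists_rot h₁ hu₁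
  obtain ⟨f₂, t₂, hc₂, hr₂, hf₂⟩ := exists_rot h₂ hu₂
  have m₁' : ∀ e ∈ f₁ :: t₁, col e = b := fun e he => m₁ e (hr₁.perm.mem_iff.1 he)
  have m₂' : ∀ e ∈ f₂ :: t₂, col e = b := fun e he => m₂ e (hr₂.perm.mem_iff.1 he)
  have hf : f₁ = f₂ :=
    eq_of_tail_eq hfr hc₁ hc₂ (List.mem_cons_self) (List.mem_cons_self)
      (by rw [m₁' _ (List.mem_cons_self), m₂' _ (List.mem_cons_self)])
      (by rw [hf₁, hf₂])
  have heq : f₁ :: t₁ = f₂ :: t₂ := by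
    rcases le_total (f₁ :: t₁).length (f₂ :: t₂).length with hl | hl
    · exact eq_of_same_start hfr hc₁ hc₂ m₁' m₂' hl (by simp [hf])
    · exact (eq_of_same_start hfr hc₂ hc₁ m₂' m₁' hl (by simp [hf])).symm
  exact hr₁.symm.trans (by rw [heq]; exact hr₂)

theorem split_at_first (p : E → Prop) {d : List E} {e₀ : E} (he₀ : e₀ ∈ d) (hp : p e₀) :
    ∃ T g R, d = T ++ g :: R ∧ (∀ x ∈ T, ¬ p x) ∧ p g := by
  induction d with
  | nil => cases he₀
  | cons a d ih =>
    by_cases ha : p a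
    · exact ⟨[], a, d, rfl, by simp, ha⟩
    · have hmem : e₀ ∈ d := by
        rcases List.mem_cons.1 he₀ with rfl | h
        · exact absurd hp ha
        · exact h
      obtain ⟨T, g, R, hTR, hT, hg⟩ := ih hmem
      refine ⟨a :: T, g, R, by rw [hTR]; rfl, ?_, hg⟩
      intro x hx
      rcases List.mem_cons.1 hx with rfl | hx
      · exact ha
      · exact hT x hx

theorem mem_walkVerts_cycle {w : List E} (h : IsMinCycle tl hd w) {x : V} :
    x ∈ walkVerts tl hd w ↔ x ∈ w.map hd := by
  obtain ⟨e, t, rfl⟩ := List.exists_cons_of_ne_nil h.ne_nil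
  show x ∈ tl e :: (e :: t).map hd ↔ _
  constructor
  · intro hx
    rcases List.mem_cons.1 hx with rfl | hx
    · have h0 : 0 < (e :: t).length := by simp
      have hcl := h.closed_idx h0
      have he0 : (e :: t)[0]'h0 = e := rfl
      rw [he0] at hcl
      rw [← hcl]
      exact List.mem_map_of_mem (f := hd) (List.getElem_mem _)
    · exact hx
  · exact fun hx => List.mem_cons_of_mem _ hx

theorem not_two_common (hfr : CyclicAmpleFraming tl hd col) {c₁ c₂ : List E}
    (h₁ : IsMinCycle tl hd c₁) (h₂ : IsMinCycle tl hd c₂) {b₁ b₂ : Col}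
    (m₁ : ∀ e ∈ c₁, col e = b₁) (m₂ : ∀ e ∈ c₂, col e = b₂) (hbb : b₁ ≠ b₂)
    {u v : V} (hu₁ : u ∈ c₁.map hd) (hu₂ : u ∈ c₂.map hd)
    (hv₁ : v ∈ c₁.map hd) (hv₂ : v ∈ c₂.map hd) (huv : u ≠ v) : False := by
  -- rotate c₁ so that its first edge has tail u
  obtain ⟨e₁, t₁, hd₁, hr₁, he₁⟩ := exists_rot h₁ hu₁
  have m₁' : ∀ e ∈ e₁ :: t₁, col e = b₁ := fun e he => m₁ e (hr₁.perm.mem_iff.1 he)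
  have hv₁' : v ∈ (e₁ :: t₁).map hd := ((hr₁.perm.map hd).mem_iff).2 hv₁
  -- split at the first head lying on c₂
  obtain ⟨ev, hev, hevv⟩ := List.mem_map.1 hv₁'
  obtain ⟨T, f, R, hsplit, hT, hfS⟩ :=
    split_at_first (fun e => hd e ∈ c₂.map hd) hev
      (show hd ev ∈ c₂.map hd by rw [hevv]; exact hv₂)
  -- hd f ≠ u
  have hfu : hd f ≠ u := by
    intro hfu
    cases R with
    | nil =>
      have hv' := hv₁'
      rw [hsplit, List.map_append, List.map_cons, List.map_nil] at hv'
      rcases List.mem_append.1 hv' with h | h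
      · obtain ⟨a, ha, hav⟩ := List.mem_map.1 h
        exact hT a ha (hav ▸ hv₂)
      · have hvf : v = hd f := by simpa using h
        exact huv (hfu.symm.trans hvf.symm)
    | cons r R' =>
      have hfnotR : hd f ∉ (r :: R').map hd := by
        have hnd := hd₁.2.2
        rw [hsplit, List.map_append, List.map_cons] at hnd
        exact (List.nodup_cons.1 (List.nodup_append.1 hnd).2.1).1
      have hgl : (e₁ :: t₁).getLast? = (r :: R').getLast? := by
        rw [hsplit, List.getLast?_append_of_ne_nil _ (by simp),
          ← List.singleton_append, List.getLast?_append_of_ne_nil _ (by simp)]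
      have hlast : hd ((r :: R').getLast (by simp)) = u := by
        have hcl := hd₁.2.1 ((r :: R').getLast (by simp))
          (by rw [Option.mem_def, hgl]; exact List.getLast?_eq_getLast (by simp))
          e₁ rfl
        rw [hcl]
        exact he₁
      apply hfnotR
      rw [hfu, ← hlast]
      exact List.mem_map_of_mem (f := hd) (List.getLast_mem _)
  -- u is not a vertex of the arc T ++ [f]
  have hbu : u ∉ (T ++ [f]).map hd := by
    intro hu'
    rw [List.map_append, List.map_cons, List.map_nil] at hu'
    rcases List.mem_append.1 hu' with h | h
    · obtain ⟨a, ha, hau⟩ := List.mem_map.1 h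
      exact hT a ha (hau ▸ hu₂)
    · have h' : u = hd f := by simpa using h
      exact hfu h'.symm
  -- rotate c₂ at v' := hd f
  obtain ⟨e₂, t₂, hd₂, hr₂, he₂⟩ := exists_rot h₂ hfS
  have hu₂' : u ∈ (e₂ :: t₂).map hd := ((hr₂.perm.map hd).mem_iff).2 hu₂
  obtain ⟨eu, heu, heuu⟩ := List.mem_map.1 hu₂'
  obtain ⟨T₂, g, R₂, hsplit₂, hT₂, hgS⟩ :=
    split_at_first (fun e => hd e = u ∨ hd e ∈ (T ++ [f]).map hd) heu
      (show hd eu = u ∨ _ from Or.inl heuu)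
  have hgmem : g ∈ e₂ :: t₂ := by rw [hsplit₂]; simp
  -- hd g = u
  have hgu : hd g = u := by
    rcases hgS with h | h
    · exact h
    · exfalso
      rw [List.map_append, List.map_cons, List.map_nil] at h
      rcases List.mem_append.1 h with h' | h'
      · obtain ⟨a, ha, hag⟩ := List.mem_map.1 h'
        have hgc₂ : hd g ∈ c₂.map hd :=
          ((hr₂.perm.map hd).mem_iff).1 (List.mem_map_of_mem (f := hd) hgmem)
        exact hT a ha (hag ▸ hgc₂)
      · have hgf : hd g = hd f := by simpa using h'
        cases R₂ with
        | nil =>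
          rw [hsplit₂, List.map_append, List.map_cons, List.map_nil] at hu₂'
          rcases List.mem_append.1 hu₂' with h'' | h''
          · obtain ⟨a, ha, hau⟩ := List.mem_map.1 h''
            exact hT₂ a ha (Or.inl hau)
          · have : u = hd g := by simpa using h''
            exact hfu (hgf ▸ this.symm)
        | cons r R' =>
          have hfnotR : hd g ∉ (r :: R').map hd := by
            have hnd := hd₂.2.2
            rw [hsplit₂, List.map_append, List.map_cons] at hnd
            exact (List.nodup_cons.1 (List.nodup_append.1 hnd).2.1).1
          have hgl : (e₂ :: t₂).getLast? = (r :: R').getLast? := by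
            rw [hsplit₂, List.getLast?_append_of_ne_nil _ (by simp),
              ← List.singleton_append, List.getLast?_append_of_ne_nil _ (by simp)]
          have hlast : hd ((r :: R').getLast (by simp)) = hd f := by
            have hcl := hd₂.2.1 ((r :: R').getLast (by simp))
              (by rw [Option.mem_def, hgl]; exact List.getLast?_eq_getLast (by simp))
              e₂ rfl
            rw [hcl]
            exact he₂
          apply hfnotR
          rw [hgf, ← hlast]
          exact List.mem_map_of_mem (f := hd) (List.getLast_mem _)
  -- the spliced cycle
  have hApre : (T ++ [f]) <+: (e₁ :: t₁) := ⟨R, by rw [hsplit]; simp⟩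
  have hBpre : (T₂ ++ [g]) <+: (e₂ :: t₂) := ⟨R₂, by rw [hsplit₂]; simp⟩
  have hAne : (T ++ [f]) ≠ [] := by simp
  have hBne : (T₂ ++ [g]) ≠ [] := by simp
  have headA : (T ++ [f]).head? = some e₁ := by
    have h' := List.head?_append_of_ne_nil (T ++ [f]) (l₂ := R) hAne
    rw [show (T ++ [f]) ++ R = e₁ :: t₁ by rw [hsplit]; simp] at h'
    exact h'.symm
  have headB : (T₂ ++ [g]).head? = some e₂ := by
    have h' := List.head?_append_of_ne_nil (T₂ ++ [g]) (l₂ := R₂) hBne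
    rw [show (T₂ ++ [g]) ++ R₂ = e₂ :: t₂ by rw [hsplit₂]; simp] at h'
    exact h'.symm
  have lastA : (T ++ [f]).getLast? = some f := List.getLast?_concat
  have lastB : (T₂ ++ [g]).getLast? = some g := List.getLast?_concat
  have hC : IsMinCycle tl hd ((T ++ [f]) ++ (T₂ ++ [g])) := by
    refine ⟨⟨by simp, List.isChain_append.2 ⟨hd₁.1.2.prefix hApre, hd₂.1.2.prefix hBpre,
      fun x hx y hy => ?_⟩⟩, fun x hx y hy => ?_, ?_⟩
    · rw [Option.mem_def, lastA, Option.some_inj] at hx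
      rw [Option.mem_def, headB, Option.some_inj] at hy
      rw [← hx, ← hy]
      exact he₂.symm
    · rw [Option.mem_def, List.getLast?_append_of_ne_nil _ hBne, lastB,
        Option.some_inj] at hx
      rw [Option.mem_def, List.head?_append_of_ne_nil _ hAne, headA,
        Option.some_inj] at hy
      rw [← hx, ← hy, hgu]
      exact he₁.symm
    · rw [List.map_append]
      refine List.nodup_append.2 ⟨List.Nodup.sublist ((hApre.map hd).sublist) hd₁.2.2,
        List.Nodup.sublist ((hBpre.map hd).sublist) hd₂.2.2, fun x hxA x' hxB hxx => ?_⟩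
      subst hxx
      rw [List.map_append, List.map_cons, List.map_nil] at hxB
      rcases List.mem_append.1 hxB with h' | h'
      · obtain ⟨a, ha, hax⟩ := List.mem_map.1 h'
        exact hT₂ a ha (Or.inr (hax ▸ hxA))
      · have hx' : x = hd g := by simpa using h'
        rw [hx', hgu] at hxA
        exact hbu hxA
  obtain ⟨b, hb⟩ := hfr.2 _ hC
  have hcolf : col f = b₁ := m₁' f (by rw [hsplit]; simp)
  have hcolg : col g = b₂ := m₂ g (hr₂.perm.mem_iff.1 hgmem)
  have hbf : col f = b := hb f (by simp)
  have hbg : col g = b := hb g (by simp)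
  exact hbb ((hcolf.symm.trans hbf).trans (hbg.symm.trans hcolg))

end Aux

/-- with a cyclic ample framing, any two distinct minimal directed
cycles are edge-disjoint and have at most one vertex in common. -/
theorem statement1 {V E : Type*} [Fintype V] [Fintype E] (tl hd : E → V) (col : E → Col)
    (hfr : CyclicAmpleFraming tl hd col)
    (c₁ c₂ : List E) (h₁ : IsMinCycle tl hd c₁) (h₂ : IsMinCycle tl hd c₂)
    (hne : ¬ List.IsRotated c₁ c₂) :
    (∀ e : E, e ∈ c₁ → e ∉ c₂) ∧
    {v : V | v ∈ walkVerts tl hd c₁ ∧ v ∈ walkVerts tl hd c₂}.Subsingleton := by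
  obtain ⟨b₁, m₁⟩ := hfr.2 c₁ h₁
  obtain ⟨b₂, m₂⟩ := hfr.2 c₂ h₂
  have hsame : ∀ u : V, u ∈ c₁.map hd → u ∈ c₂.map hd → b₁ = b₂ → False := by
    intro u hu₁ hu₂ hb
    subst hb
    exact hne (rotated_of_common hfr h₁ h₂ m₁ m₂ hu₁ hu₂)
  constructor
  · intro e he₁ he₂
    have hb : b₁ = b₂ := (m₁ e he₁).symm.trans (m₂ e he₂)
    exact hsame (hd e) (List.mem_map_of_mem (f := hd) he₁) (List.mem_map_of_mem (f := hd) he₂) hb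
  · intro x hx y hy
    by_contra hxy
    have hx₁ := (mem_walkVerts_cycle h₁).1 hx.1
    have hx₂ := (mem_walkVerts_cycle h₂).1 hx.2
    have hy₁ := (mem_walkVerts_cycle h₁).1 hy.1
    have hy₂ := (mem_walkVerts_cycle h₂).1 hy.2
    rcases eq_or_ne b₁ b₂ with hb | hb
    · exact hsame x hx₁ hx₂ hb
    · exact not_two_common hfr h₁ h₂ m₁ m₂ hb hx₁ hx₂ hy₁ hy₂ hxy

end PaperDKK
end

section
/- Let H be a finite directed multigraph equipped with a cyclic ample framing, let ρ be a good route of H and let C be a minimal directed cycle of H. Then ρ meets C in at most one maximal common subwalk: the edges of ρ that belong to C occur as a single (possibly empty) block of consecutive edges of ρ, and the set of positions along ρ at which ρ visits a vertex of C is an interval of consecutive positions. -/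
namespace PaperDKK

variable {V E : Type*}

section Aux

variable {V E : Type*} {tl hd : E → V} {col : E → Col}

lemma getElem_idx_congr {α : Type*} (l : List α) {m n : ℕ} (h : m = n) (hm : m < l.length) :
    l[m] = l[n]'(h ▸ hm) := by subst h; rfl

lemma dup_split {α γ : Type*} (g : α → γ) :
    ∀ (u : List α), ¬ (u.map g).Nodup →
      ∃ A e B f C, u = A ++ e :: B ++ f :: C ∧ g e = g f := by
  intro u
  induction u with
  | nil => intro hu; simp at hu
  | cons a l ih =>
    intro hu
    by_cases h : g a ∈ l.map g
    · obtain ⟨f, hf, hgf⟩ := List.mem_map.mp h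
      obtain ⟨B, C, rfl⟩ := List.append_of_mem hf
      exact ⟨[], a, B, f, C, rfl, hgf.symm⟩
    · have h2 : ¬ (l.map g).Nodup := fun hn =>
        hu (by simp only [List.map_cons, List.nodup_cons]; exact ⟨h, hn⟩)
      obtain ⟨A, e, B, f, C, heq, hef⟩ := ih h2
      exact ⟨a :: A, e, B, f, C, by rw [heq]; rfl, hef⟩

lemma closed_extract :
    ∀ (n : ℕ) (u : List E), u.length ≤ n → u ≠ [] →
      List.Chain' (fun e f => hd e = tl f) u →
      (∀ e ∈ u.getLast?, ∀ f ∈ u.head?, hd e = tl f) →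
      ∃ D, D <:+: u ∧ IsMinCycle tl hd D := by
  intro n
  induction n with
  | zero =>
    intro u hlen hne _ _
    exact absurd (List.length_eq_zero_iff.mp (Nat.le_zero.mp hlen)) hne
  | succ n ih =>
    intro u hlen hne hch hcl
    by_cases hnd : (u.map hd).Nodup
    · exact ⟨u, List.infix_refl u, ⟨hne, hch⟩, hcl, hnd⟩
    obtain ⟨A, e, B, f, C, rfl, hef⟩ := dup_split hd u hnd
    have hinf : (B ++ [f]) <:+: A ++ e :: B ++ f :: C := ⟨A ++ [e], C, by simp⟩
    have hch' : List.Chain' (fun e f => hd e = tl f) (B ++ [f]) := hch.infix hinf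
    have hj : ∀ y ∈ (B ++ f :: C).head?, hd e = tl y := by
      have h3 : List.Chain' (fun e f => hd e = tl f) (e :: (B ++ f :: C)) :=
        hch.infix ⟨A, [], by simp⟩
      exact (List.isChain_cons.mp h3).1
    have hcl' : ∀ x ∈ (B ++ [f]).getLast?, ∀ y ∈ (B ++ [f]).head?, hd x = tl y := by
      intro x hx y hy
      rw [List.getLast?_concat] at hx
      have hx' : f = x := by simpa using hx
      subst hx'
      have hy' : y ∈ (B ++ f :: C).head? := by
        cases B with
        | nil => simpa using hy
        | cons b B' => simpa using hy
      rw [← hef]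
      exact hj y hy'
    have hlen' : (B ++ [f]).length ≤ n := by
      simp only [List.length_append, List.length_cons, List.length_nil] at hlen ⊢
      omega
    obtain ⟨D, hD, hDmc⟩ := ih (B ++ [f]) hlen' (by simp) hch' hcl'
    exact ⟨D, hD.trans hinf, hDmc⟩

lemma minCycle_rotate {A B : List E} (h : IsMinCycle tl hd (A ++ B)) :
    IsMinCycle tl hd (B ++ A) := by
  obtain ⟨⟨hne, hch⟩, hcl, hnd⟩ := h
  rcases eq_or_ne A [] with rfl | hA
  · simp only [List.nil_append] at hne hch hcl hnd
    exact ⟨⟨by simpa using hne, by simpa using hch⟩, by simpa using hcl, by simpa using hnd⟩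
  rcases eq_or_ne B [] with rfl | hB
  · simp only [List.append_nil] at hne hch hcl hnd
    exact ⟨⟨by simpa using hne, by simpa using hch⟩, by simpa using hcl, by simpa using hnd⟩
  obtain ⟨chA, chB, jAB⟩ := List.isChain_append.mp hch
  have hcl' : ∀ x ∈ B.getLast?, ∀ y ∈ A.head?, hd x = tl y := by
    intro x hx y hy
    exact hcl x (by rw [List.getLast?_append_of_ne_nil _ hB]; exact hx)
      y (by rw [List.head?_append_of_ne_nil _ hA]; exact hy)
  refine ⟨⟨fun hBA => hB (List.append_eq_nil_iff.mp hBA).1, ?_⟩, ?_, ?_⟩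
  · exact List.isChain_append.mpr ⟨chB, chA, hcl'⟩
  · intro x hx y hy
    rw [List.getLast?_append_of_ne_nil _ hA] at hx
    rw [List.head?_append_of_ne_nil _ hB] at hy
    exact jAB x hx y hy
  · rw [List.map_append] at hnd ⊢
    exact List.nodup_append_comm.mp hnd

lemma tl_mem_verts :
    ∀ (u : List E), List.Chain' (fun e f => hd e = tl f) u →
      ∀ g ∈ u, tl g ∈ walkVerts tl hd u := by
  intro u
  induction u with
  | nil => intro _ g hg; simp at hg
  | cons a l ih =>
    intro hch g hg
    rcases List.mem_cons.mp hg with rfl | hg'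
    · simp [walkVerts]
    · cases l with
      | nil => simp at hg'
      | cons b l' =>
        have hab : hd a = tl b := (List.isChain_cons_cons.mp hch).1
        have hmem := ih hch.tail g hg'
        simp only [walkVerts, List.map_cons, List.mem_cons] at hmem ⊢
        rcases hmem with h | h | h
        · right; left; rw [h]; exact hab.symm
        · right; right; left; exact h
        · right; right; right; exact h

lemma mem_verts_closed {c : List E} (hc : IsMinCycle tl hd c) {v : V} :
    v ∈ walkVerts tl hd c ↔ v ∈ c.map hd := by
  obtain ⟨⟨hne, hch⟩, hcl, -⟩ := hc
  cases c with
  | nil => exact absurd rfl hne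
  | cons a l =>
    have hlast : hd ((a :: l).getLast (by simp)) = tl a :=
      hcl _ (by rw [List.getLast?_eq_getLast (by simp)]; exact Option.mem_def.mpr rfl)
        a (Option.mem_def.mpr rfl)
    simp only [walkVerts]
    constructor
    · intro hv
      rcases List.mem_cons.mp hv with rfl | h
      · exact List.mem_map.mpr ⟨_, List.getLast_mem _, hlast⟩
      · exact h
    · intro hv
      exact List.mem_cons_of_mem _ hv

lemma exists_out {c : List E} (hc : IsMinCycle tl hd c) {v : V}
    (hv : v ∈ c.map hd) : ∃ f ∈ c, tl f = v := by
  obtain ⟨g, hg, rfl⟩ := List.mem_map.mp hv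
  obtain ⟨A, B, rfl⟩ := List.append_of_mem hg
  obtain ⟨⟨hne, hch⟩, hcl, -⟩ := hc
  cases B with
  | nil =>
    have h1 : (A ++ [g]).getLast? = some g := List.getLast?_concat
    have hmem := hcl g (by rw [h1]; exact Option.mem_def.mpr rfl)
      ((A ++ [g]).head (by simp))
      (by rw [List.head?_eq_head (by simp)]; exact Option.mem_def.mpr rfl)
    exact ⟨_, List.head_mem _, hmem.symm⟩
  | cons f B' =>
    have hpair : List.Chain' (fun e f => hd e = tl f) [g, f] :=
      hch.infix ⟨A, B', by simp⟩
    exact ⟨f, by simp, (List.isChain_pair.mp hpair).symm⟩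

lemma cyc_out (hfr : CyclicAmpleFraming tl hd col) {c : List E}
    (hc : IsMinCycle tl hd c) {β : Col} (hβ : ∀ e ∈ c, col e = β)
    {g : E} (hgt : tl g ∈ c.map hd) (hgc : col g = β) : g ∈ c := by
  obtain ⟨f, hf, hft⟩ := exists_out hc hgt
  obtain ⟨e0, he0, he0h⟩ := List.mem_map.mp hgt
  have hint : IsInternal tl hd (tl g) :=
    ⟨fun hs => hs e0 he0h, fun hs => hs f hft⟩
  obtain ⟨_, _, h3, h4⟩ := hfr.1 _ hint
  have hfβ : col f = β := hβ f hf
  cases β with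
  | red => have hgf := h3.unique ⟨rfl, hgc⟩ ⟨hft, hfβ⟩; rw [hgf]; exact hf
  | blue => have hgf := h4.unique ⟨rfl, hgc⟩ ⟨hft, hfβ⟩; rw [hgf]; exact hf

lemma cyc_in (hfr : CyclicAmpleFraming tl hd col) {c : List E}
    (hc : IsMinCycle tl hd c) {β : Col} (hβ : ∀ e ∈ c, col e = β)
    {g : E} (hgh : hd g ∈ c.map hd) (hgc : col g = β) : g ∈ c := by
  obtain ⟨e0, he0, he0h⟩ := List.mem_map.mp hgh
  obtain ⟨f, hf, hft⟩ := exists_out hc hgh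
  have hint : IsInternal tl hd (hd g) :=
    ⟨fun hs => hs e0 he0h, fun hs => hs f hft⟩
  obtain ⟨h1, h2, _, _⟩ := hfr.1 _ hint
  have he0β : col e0 = β := hβ e0 he0
  cases β with
  | red => have hge := h1.unique ⟨rfl, hgc⟩ ⟨he0h, he0β⟩; rw [hge]; exact he0
  | blue => have hge := h2.unique ⟨rfl, hgc⟩ ⟨he0h, he0β⟩; rw [hge]; exact he0

lemma arc {c : List E} (hc : IsMinCycle tl hd c) {a b : V}
    (ha : a ∈ c.map hd) (hb : b ∈ c.map hd) (hab : a ≠ b) :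
    ∃ P : List E, P ≠ [] ∧ (∀ x ∈ P, x ∈ c) ∧
      List.Chain' (fun e f => hd e = tl f) P ∧
      (∀ x ∈ P.head?, tl x = a) ∧ (∀ x ∈ P.getLast?, hd x = b) ∧
      (P.map hd).Nodup ∧ a ∉ P.map hd := by
  obtain ⟨e, he, hea⟩ := List.mem_map.mp ha
  obtain ⟨A, B, hcAB⟩ := List.append_of_mem he
  have hc1 : IsMinCycle tl hd ((e :: B) ++ A) := minCycle_rotate (hcAB ▸ hc)
  have hc2 : IsMinCycle tl hd ((B ++ A) ++ [e]) :=
    minCycle_rotate (A := [e]) (B := B ++ A) hc1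
  obtain ⟨⟨hne2, hch2⟩, hcl2, hnd2⟩ := hc2
  have hmem2 : ∀ x, x ∈ (B ++ A) ++ [e] ↔ x ∈ c := by
    intro x; subst hcAB; simp; tauto
  have htla : ∀ y ∈ ((B ++ A) ++ [e]).head?, tl y = a := by
    intro y hy
    have h5 := hcl2 e (by rw [List.getLast?_concat]; exact Option.mem_def.mpr rfl) y hy
    exact h5.symm.trans hea
  have hb2 : b ∈ ((B ++ A) ++ [e]).map hd := by
    obtain ⟨f, hf, hfb⟩ := List.mem_map.mp hb
    exact List.mem_map.mpr ⟨f, (hmem2 f).mpr hf, hfb⟩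
  obtain ⟨f, hf2, hfb⟩ := List.mem_map.mp hb2
  obtain ⟨U, Rr, hURr⟩ := List.append_of_mem hf2
  have hRne : Rr ≠ [] := by
    rintro rfl
    have h1 : ((B ++ A) ++ [e]).getLast? = some e := List.getLast?_concat
    rw [hURr, List.getLast?_concat] at h1
    have hfe : f = e := by simpa using h1
    apply hab
    rw [← hea, ← hfb, hfe]
  refine ⟨U ++ [f], by simp, ?_, ?_, ?_, ?_, ?_, ?_⟩
  · intro x hx
    apply (hmem2 x).mp
    rw [hURr]
    simp only [List.mem_append, List.mem_cons, List.mem_singleton] at hx ⊢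
    tauto
  · exact hch2.infix ⟨[], Rr, by rw [hURr]; simp⟩
  · intro x hx
    refine htla x ?_
    rw [hURr]
    cases U with
    | nil => simpa using hx
    | cons u U' => simpa using hx
  · intro x hx
    rw [List.getLast?_concat] at hx
    have hx' : f = x := by simpa using hx
    subst hx'; exact hfb
  · have hnd' := hnd2
    rw [hURr, List.map_append, List.map_cons] at hnd'
    rw [List.map_append, List.map_cons, List.map_nil]
    exact hnd'.sublist (List.Sublist.append_left
      (List.cons_sublist_cons.mpr (List.nil_sublist _)) _)
  · intro hamem
    have helast : ((B ++ A) ++ [e]).getLast? = some e := List.getLast?_concat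
    rw [hURr, List.getLast?_append_of_ne_nil _ (List.cons_ne_nil f Rr)] at helast
    have heRr : e ∈ f :: Rr :=
      List.mem_of_mem_getLast? (by rw [helast]; exact Option.mem_def.mpr rfl)
    have heRr' : e ∈ Rr := by
      rcases List.mem_cons.mp heRr with rfl | h
      · exact absurd (by rw [← hea, ← hfb]) hab
      · exact h
    have hnd' := hnd2
    rw [hURr, List.map_append, List.map_cons] at hnd'
    obtain ⟨-, hnd2', hdisj⟩ := List.nodup_append.mp hnd'
    rw [List.map_append, List.map_cons, List.map_nil] at hamem
    rcases List.mem_append.mp hamem with h | h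
    · exact hdisj _ h _ (List.mem_cons_of_mem _ (List.mem_map.mpr ⟨e, heRr', hea⟩)) rfl
    · have hafb : a = hd f := by simpa using h
      exact hab (by rw [hafb, hfb])

lemma infix_split {α : Type*} {D A B : List α} (h : D <:+: A ++ B) :
    D <:+: A ∨ D <:+: B ∨
      ∃ D₁ D₂, D = D₁ ++ D₂ ∧ D₁ ≠ [] ∧ D₂ ≠ [] ∧ D₁ <:+ A ∧ D₂ <+: B := by
  obtain ⟨s, t, hst⟩ := h
  have hst' : s ++ (D ++ t) = A ++ B := by rw [← hst, List.append_assoc]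
  rcases List.append_eq_append_iff.mp hst' with ⟨a', h1, h2⟩ | ⟨c', h1, h2⟩
  · -- h1 : A = s ++ a', h2 : D ++ t = a' ++ B
    rcases List.append_eq_append_iff.mp h2 with ⟨x, h3, h4⟩ | ⟨x, h3, h4⟩
    · -- h3 : a' = D ++ x, h4 : t = x ++ B
      left
      exact ⟨s, x, by rw [h1, h3, List.append_assoc]⟩
    · -- h3 : D = a' ++ x, h4 : B = x ++ t
      rcases eq_or_ne a' [] with rfl | ha'
      · right; left
        rw [List.nil_append] at h3
        exact ⟨[], t, by rw [List.nil_append, h3]; exact h4.symm⟩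
      rcases eq_or_ne x [] with rfl | hx
      · left
        rw [List.append_nil] at h3
        exact ⟨s, [], by rw [List.append_nil, h3]; exact h1.symm⟩
      right; right
      exact ⟨a', x, h3, ha', hx, ⟨s, h1.symm⟩, ⟨t, h4.symm⟩⟩
  · -- h1 : s = A ++ c', h2 : B = c' ++ (D ++ t)
    right; left
    exact ⟨c', t, by rw [List.append_assoc]; exact h2.symm⟩

lemma nodup_no_closed_infix {P D : List E}
    (hch : List.Chain' (fun e f => hd e = tl f) P)
    (hnd : (P.map hd).Nodup)
    (hhead : ∀ x ∈ P.head?, tl x ∉ P.map hd)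
    (hD : D <:+: P) (hne : D ≠ [])
    (hcl : ∀ x ∈ D.getLast?, ∀ y ∈ D.head?, hd x = tl y) : False := by
  obtain ⟨x, y, hxy⟩ := id hD
  have hlastD : hd (D.getLast hne) = tl (D.head hne) :=
    hcl _ (by rw [List.getLast?_eq_getLast hne]; exact Option.mem_def.mpr rfl)
      _ (by rw [List.head?_eq_head hne]; exact Option.mem_def.mpr rfl)
  cases x with
  | nil =>
    simp only [List.nil_append] at hxy
    have h1 : P.head? = D.head? := by rw [← hxy]; exact List.head?_append_of_ne_nil _ hne
    have hmem : hd (D.getLast hne) ∈ P.map hd :=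
      List.mem_map.mpr ⟨_, hD.subset (List.getLast_mem hne), rfl⟩
    exact hhead _ (by rw [h1, List.head?_eq_head hne]; exact Option.mem_def.mpr rfl)
      (hlastD ▸ hmem)
  | cons x0 x' =>
    have hch' := hch
    rw [← hxy, List.append_assoc] at hch'
    obtain ⟨chx, chDy, jun⟩ := List.isChain_append.mp hch'
    have hjun : hd ((x0 :: x').getLast (List.cons_ne_nil _ _)) = tl (D.head hne) := by
      refine jun _ (by rw [List.getLast?_eq_getLast (List.cons_ne_nil _ _)]; exact Option.mem_def.mpr rfl) _ ?_
      rw [List.head?_append_of_ne_nil _ hne, List.head?_eq_head hne]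
      exact Option.mem_def.mpr rfl
    have hnd' := hnd
    rw [← hxy, List.append_assoc, List.map_append] at hnd'
    obtain ⟨-, -, hdisj⟩ := List.nodup_append.mp hnd'
    refine hdisj _ (List.mem_map.mpr ⟨_, List.getLast_mem (List.cons_ne_nil x0 x'), rfl⟩) _ ?_ rfl
    rw [List.map_append]
    exact List.mem_append_left _
      (List.mem_map.mpr ⟨_, List.getLast_mem hne, hlastD.trans hjun.symm⟩)

lemma walkVerts_length {w : List E} (hw : w ≠ []) :
    (walkVerts tl hd w).length = w.length + 1 := by
  cases w with
  | nil => exact absurd rfl hw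
  | cons a l => simp [walkVerts]

lemma walkVerts_getElem_succ {w : List E} {m : ℕ} (hm : m < w.length)
    (hm' : m + 1 < (walkVerts tl hd w).length) :
    (walkVerts tl hd w)[m+1] = hd (w[m]) := by
  cases w with
  | nil => simp at hm
  | cons a l =>
    simp only [walkVerts]
    rw [List.getElem_cons_succ, List.getElem_map]

lemma walkVerts_getElem_tl {w : List E}
    (hwch : List.Chain' (fun e f => hd e = tl f) w) {m : ℕ} (hm : m < w.length)
    (hm' : m < (walkVerts tl hd w).length) :
    (walkVerts tl hd w)[m] = tl (w[m]) := by
  cases m with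
  | zero =>
    cases w with
    | nil => simp at hm
    | cons a l => simp [walkVerts]
  | succ m' =>
    have h1 := walkVerts_getElem_succ (tl := tl) (hd := hd) (w := w) (m := m')
      (by omega) hm'
    rw [h1]
    have h2 := List.isChain_iff_getElem.mp hwch m' (by omega)
    simpa using h2

lemma gap_bounds {P : ℕ → Prop} [DecidablePred P] {i j k : ℕ}
    (hij : i ≤ j) (hjk : j < k) (hPi : P i) (hPk : P k) (hPj : ¬ P j) :
    ∃ i' k', i ≤ i' ∧ i' < j ∧ j < k' ∧ k' ≤ k ∧ P i' ∧ P k' ∧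
      ∀ m, i' < m → m < k' → ¬ P m := by
  have hex : ∃ d, P (j + 1 + d) :=
    ⟨k - (j+1), by rw [show j + 1 + (k - (j+1)) = k by omega]; exact hPk⟩
  refine ⟨Nat.findGreatest P j, j + 1 + Nat.find hex,
    Nat.le_findGreatest hij hPi, ?_, by omega, ?_, Nat.findGreatest_spec hij hPi,
    Nat.find_spec hex, ?_⟩
  · have h1 : Nat.findGreatest P j ≤ j := Nat.findGreatest_le j
    rcases lt_or_eq_of_le h1 with h | h
    · exact h
    · exact absurd (h ▸ Nat.findGreatest_spec hij hPi) hPj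
  · have h6 := Nat.find_min' hex
      (m := k - (j+1)) (by rw [show j + 1 + (k - (j+1)) = k by omega]; exact hPk)
    omega
  · intro m h1 h2
    rcases le_or_gt m j with hmj | hmj
    · exact Nat.findGreatest_is_greatest h1 hmj
    · intro hP
      obtain ⟨d, rfl⟩ : ∃ d, m = j + 1 + d := ⟨m - (j+1), by omega⟩
      exact Nat.find_min hex (by omega) hP

abbrev predOn (tl hd : E → V) (c w : List E) (m : ℕ) : Prop :=
  ∃ hm : m < (walkVerts tl hd w).length, (walkVerts tl hd w)[m] ∈ c.map hd

lemma vert_interval (hfr : CyclicAmpleFraming tl hd col)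
    {w : List E} (hgood : IsGoodRoute tl hd w)
    {c : List E} (hc : IsMinCycle tl hd c)
    {i j k : ℕ} (hij : i ≤ j) (hjk : j ≤ k) (hk : k < (walkVerts tl hd w).length)
    (hi : (walkVerts tl hd w)[i]'(by omega) ∈ c.map hd)
    (hkc : (walkVerts tl hd w)[k] ∈ c.map hd) :
    (walkVerts tl hd w)[j]'(by omega) ∈ c.map hd := by
  classical
  obtain ⟨⟨hwne, hwch⟩, -, -⟩ := hgood.1
  obtain ⟨β, hβ⟩ := hfr.2 c hc
  by_contra hj
  have hLlen := walkVerts_length (tl := tl) (hd := hd) hwne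
  have hij' : i < j := lt_of_le_of_ne hij (by rintro rfl; exact hj hi)
  have hjk' : j < k := lt_of_le_of_ne hjk (by rintro rfl; exact hj hkc)
  have hPi : predOn tl hd c w i := ⟨by omega, hi⟩
  have hPk : predOn tl hd c w k := ⟨hk, hkc⟩
  have hPj : ¬ predOn tl hd c w j := fun h => hj h.2
  obtain ⟨i', k', hii', hi'j, hjk'', hk'k, hPi', hPk', hgap⟩ :=
    gap_bounds hij hjk' hPi hPk hPj
  have hk'w : k' ≤ w.length := by omega
  have hi'k' : i' + 2 ≤ k' := by omega
  have hxlt : i' < w.length := by omega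
  have hylt : k' - 1 < w.length := by omega
  set S := (w.drop i').take (k' - i') with hSdef
  have hSlen : S.length = k' - i' := by
    rw [hSdef, List.length_take, List.length_drop]; omega
  have hSne : S ≠ [] := by
    intro h; rw [h] at hSlen; simp at hSlen; omega
  have hSget : ∀ m (hm : m < S.length), S[m] = w[i' + m]'(by omega) := by
    intro m hm
    simp only [hSdef]
    rw [List.getElem_take, List.getElem_drop]
  have hSinf : S <:+: w :=
    ((w.drop i').take_prefix _).isInfix.trans (w.drop_suffix i').isInfix
  have hSch : List.Chain' (fun e f => hd e = tl f) S := hwch.infix hSinf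
  set x := w[i']'hxlt with hxdef
  set y := w[k'-1]'hylt with hydef
  have hSlast : S[S.length - 1]'(by omega) = y := by
    rw [hSget _ (by omega), hydef]
    rw [getElem_idx_congr w (show i' + (S.length - 1) = k' - 1 by omega)]
  have hShead : S[0]'(by omega) = x := by
    rw [hSget 0 (by omega), hxdef]
    rw [getElem_idx_congr w (show i' + 0 = i' by omega)]
  have hSgetlast? : S.getLast? = some y := by
    rw [List.getLast?_eq_getLast hSne, List.getLast_eq_getElem]
    rw [hSlast]
  have hShead? : S.head? = some x := by
    rw [List.head?_eq_head hSne, List.head_eq_getElem]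
    rw [hShead]
  obtain ⟨hi'lt, hi'mem⟩ := hPi'
  rw [walkVerts_getElem_tl hwch hxlt hi'lt] at hi'mem
  have hbx : tl x ∈ c.map hd := hi'mem
  have hhy : hd y ∈ c.map hd := by
    obtain ⟨hk'lt, hk'mem⟩ := hPk'
    rw [getElem_idx_congr _ (show k' = (k'-1)+1 by omega),
      walkVerts_getElem_succ hylt (by omega)] at hk'mem
    exact hk'mem
  have hcolx : col x ≠ β := by
    intro hcx
    have hxc : x ∈ c := cyc_out hfr hc hβ hbx hcx
    have hP1 : predOn tl hd c w (i'+1) := by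
      refine ⟨by omega, ?_⟩
      rw [walkVerts_getElem_succ hxlt (by omega)]
      exact List.mem_map.mpr ⟨x, hxc, rfl⟩
    exact hgap (i'+1) (by omega) (by omega) hP1
  have hcoly : col y ≠ β := by
    intro hcy
    have hyc : y ∈ c := cyc_in hfr hc hβ hhy hcy
    have htly : tl y ∈ c.map hd := (mem_verts_closed hc).mp (tl_mem_verts c hc.1.2 y hyc)
    have hP1 : predOn tl hd c w (k'-1) := by
      refine ⟨by omega, ?_⟩
      rw [walkVerts_getElem_tl hwch hylt (by omega)]
      exact htly
    exact hgap (k'-1) (by omega) (by omega) hP1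
  by_cases hab : hd y = tl x
  · have hclS : ∀ p ∈ S.getLast?, ∀ q ∈ S.head?, hd p = tl q := by
      intro p hp q hq
      rw [hSgetlast?] at hp; rw [hShead?] at hq
      have hp' : y = p := by simpa using hp
      have hq' : x = q := by simpa using hq
      rw [← hp', ← hq']; exact hab
    obtain ⟨D, hDinf, hDmc⟩ := closed_extract S.length S le_rfl hSne hSch hclS
    exact hgood.2 D (hDinf.trans hSinf) hDmc
  · obtain ⟨P, hPne, hPc, hPch, hPhead, hPlast, hPnd, hPa⟩ := arc hc hhy hbx hab
    have hWch : List.Chain' (fun e f => hd e = tl f) (S ++ P) := by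
      apply List.isChain_append.mpr
      refine ⟨hSch, hPch, ?_⟩
      intro p hp q hq
      rw [hSgetlast?] at hp
      have hp' : y = p := by simpa using hp
      rw [← hp']
      exact (hPhead q hq).symm
    have hWcl : ∀ p ∈ (S ++ P).getLast?, ∀ q ∈ (S ++ P).head?, hd p = tl q := by
      intro p hp q hq
      rw [List.getLast?_append_of_ne_nil _ hPne] at hp
      rw [List.head?_append_of_ne_nil _ hSne, hShead?] at hq
      have hq' : x = q := by simpa using hq
      rw [← hq']
      exact hPlast p hp
    obtain ⟨D, hDinf, hDmc⟩ := closed_extract (S ++ P).length _ le_rfl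
      (by simp [hSne]) hWch hWcl
    obtain ⟨γ, hγ⟩ := hfr.2 D hDmc
    rcases infix_split hDinf with hDS | hDP | ⟨D₁, D₂, hDeq, hD1ne, hD2ne, hD1S, hD2P⟩
    · exact hgood.2 D (hDS.trans hSinf) hDmc
    · exact nodup_no_closed_infix hPch hPnd
        (fun e he => by rw [hPhead e he]; exact hPa) hDP hDmc.1.1 hDmc.2.1
    · have hyD : y ∈ D := by
        obtain ⟨u, hu⟩ := hD1S
        have hl : D₁.getLast? = some y := by
          rw [← hSgetlast?, ← hu, List.getLast?_append_of_ne_nil _ hD1ne]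
        have hy1 : y ∈ D₁ :=
          List.mem_of_mem_getLast? (by rw [hl]; exact Option.mem_def.mpr rfl)
        rw [hDeq]; exact List.mem_append_left _ hy1
      obtain ⟨q, hqD', hqP⟩ : ∃ q ∈ D, q ∈ P := by
        obtain ⟨v, hv⟩ := hD2P
        cases D₂ with
        | nil => exact absurd rfl hD2ne
        | cons q D₂' =>
          exact ⟨q, by rw [hDeq]; exact List.mem_append_right _ (List.mem_cons_self),
            by rw [← hv]; simp⟩
      have h1 : col y = γ := hγ y hyD
      have h2 : col q = γ := hγ q hqD'
      have h3 : col q = β := hβ q (hPc q hqP)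
      exact hcoly (h1.trans (h2.symm.trans h3))

lemma both_ends (hfr : CyclicAmpleFraming tl hd col)
    {w : List E} (hgood : IsGoodRoute tl hd w)
    {c : List E} (hc : IsMinCycle tl hd c) {β : Col} (hβ : ∀ e ∈ c, col e = β)
    {g : E} (hgw : [g] <:+: w) (ht : tl g ∈ c.map hd) (hh : hd g ∈ c.map hd) :
    g ∈ c := by
  by_cases hcolg : col g = β
  · exact cyc_out hfr hc hβ ht hcolg
  exfalso
  by_cases hloop : hd g = tl g
  · refine hgood.2 [g] hgw ⟨⟨by simp, List.isChain_singleton g⟩, ?_, by simp⟩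
    intro e he f hf
    have he' : g = e := by simpa using he
    have hf' : g = f := by simpa using hf
    rw [← he', ← hf']; exact hloop
  · obtain ⟨P, hPne, hPc, hPch, hPhead, hPlast, hPnd, hPa⟩ := arc hc hh ht hloop
    have hWch : List.Chain' (fun e f => hd e = tl f) ([g] ++ P) := by
      apply List.isChain_append.mpr
      refine ⟨List.isChain_singleton g, hPch, ?_⟩
      intro p hp q hq
      have hp' : g = p := by simpa using hp
      rw [← hp']
      exact (hPhead q hq).symm
    have hWcl : ∀ p ∈ ([g] ++ P).getLast?, ∀ q ∈ ([g] ++ P).head?, hd p = tl q := by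
      intro p hp q hq
      rw [List.getLast?_append_of_ne_nil _ hPne] at hp
      rw [List.head?_append_of_ne_nil _ (by simp : [g] ≠ [])] at hq
      have hq' : g = q := by simpa using hq
      rw [← hq']
      exact hPlast p hp
    obtain ⟨D, hDinf, hDmc⟩ := closed_extract ([g] ++ P).length _ le_rfl
      (by simp) hWch hWcl
    obtain ⟨γ, hγ⟩ := hfr.2 D hDmc
    rcases infix_split hDinf with hDS | hDP | ⟨D₁, D₂, hDeq, hD1ne, hD2ne, hD1S, hD2P⟩
    · have hlen := hDS.length_le
      cases D with
      | nil => exact hDmc.1.1 rfl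
      | cons d D' =>
        have hD' : D' = [] := by
          simp only [List.length_cons, List.length_singleton, List.length_nil] at hlen
          exact List.length_eq_zero_iff.mp (by omega)
        subst hD'
        have hdg : d = g := by simpa using hDS.subset (List.mem_cons_self)
        subst hdg
        have hcls := hDmc.2.1 d (by simp) d (by simp)
        exact hloop hcls
    · exact nodup_no_closed_infix hPch hPnd
        (fun e he => by rw [hPhead e he]; exact hPa) hDP hDmc.1.1 hDmc.2.1
    · have hgD : g ∈ D := by
        cases D₁ with
        | nil => exact absurd rfl hD1ne
        | cons d D₁' =>
          have hdg : d = g := by simpa using hD1S.subset (List.mem_cons_self)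
          subst hdg
          rw [hDeq]; exact List.mem_append_left _ (List.mem_cons_self)
      obtain ⟨q, hqD', hqP⟩ : ∃ q ∈ D, q ∈ P := by
        obtain ⟨v, hv⟩ := hD2P
        cases D₂ with
        | nil => exact absurd rfl hD2ne
        | cons q D₂' =>
          exact ⟨q, by rw [hDeq]; exact List.mem_append_right _ (List.mem_cons_self),
            by rw [← hv]; simp⟩
      have h1 : col g = γ := hγ g hgD
      have h2 : col q = γ := hγ q hqD'
      have h3 : col q = β := hβ q (hPc q hqP)
      exact hcolg (h1.trans (h2.symm.trans h3))

end Aux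

/-- a good route meets a minimal directed cycle in at most one
maximal common subwalk: the edges of the route lying on the cycle form a single
block of consecutive positions, and the positions at which the route visits a
vertex of the cycle form an interval. -/
theorem statement2 {V E : Type*} [Fintype V] [Fintype E] (tl hd : E → V) (col : E → Col)
    (hfr : CyclicAmpleFraming tl hd col)
    (w : List E) (hw : IsGoodRoute tl hd w)
    (c : List E) (hc : IsMinCycle tl hd c) :
    (∀ i j k : Fin w.length, i ≤ j → j ≤ k →
      w.get i ∈ c → w.get k ∈ c → w.get j ∈ c) ∧
    (∀ i j k : Fin (walkVerts tl hd w).length, i ≤ j → j ≤ k →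
      (walkVerts tl hd w).get i ∈ walkVerts tl hd c →
      (walkVerts tl hd w).get k ∈ walkVerts tl hd c →
      (walkVerts tl hd w).get j ∈ walkVerts tl hd c) := by
  obtain ⟨β, hβ⟩ := hfr.2 c hc
  have hwne : w ≠ [] := hw.1.1.1
  have hwch := hw.1.1.2
  have hLlen := walkVerts_length (tl := tl) (hd := hd) hwne
  have part2 : ∀ i j k : Fin (walkVerts tl hd w).length, i ≤ j → j ≤ k →
      (walkVerts tl hd w).get i ∈ walkVerts tl hd c →
      (walkVerts tl hd w).get k ∈ walkVerts tl hd c →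
      (walkVerts tl hd w).get j ∈ walkVerts tl hd c := by
    intro i j k hij hjk hi hk
    simp only [List.get_eq_getElem] at hi hk ⊢
    rw [mem_verts_closed hc] at hi hk ⊢
    exact vert_interval hfr hw hc (Fin.le_def.mp hij) (Fin.le_def.mp hjk) k.isLt hi hk
  refine ⟨?_, part2⟩
  intro i j k hij hjk hi hk
  simp only [List.get_eq_getElem] at hi hk ⊢
  have h1 : tl (w[(i:ℕ)]) ∈ c.map hd := (mem_verts_closed hc).mp (tl_mem_verts c hc.1.2 _ hi)
  have h2 : hd (w[(k:ℕ)]) ∈ c.map hd := List.mem_map.mpr ⟨_, hk, rfl⟩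
  have hiL : (walkVerts tl hd w)[(i:ℕ)]'(by omega) ∈ c.map hd := by
    rw [walkVerts_getElem_tl hwch i.isLt (by omega)]
    exact h1
  have hkL : (walkVerts tl hd w)[(k:ℕ)+1]'(by omega) ∈ c.map hd := by
    rw [walkVerts_getElem_succ k.isLt (by omega)]
    exact h2
  have hj1 : (walkVerts tl hd w)[(j:ℕ)]'(by omega) ∈ c.map hd :=
    vert_interval hfr hw hc (Fin.le_def.mp hij)
      (le_trans (Fin.le_def.mp hjk) (Nat.le_succ _)) (by omega) hiL hkL
  have hj2 : (walkVerts tl hd w)[(j:ℕ)+1]'(by omega) ∈ c.map hd :=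
    vert_interval hfr hw hc (le_trans (Fin.le_def.mp hij) (Nat.le_succ _))
      (Nat.succ_le_succ (Fin.le_def.mp hjk)) (by omega) hiL hkL
  rw [walkVerts_getElem_tl hwch j.isLt (by omega)] at hj1
  rw [walkVerts_getElem_succ j.isLt (by omega)] at hj2
  refine both_ends hfr hw hc hβ ⟨w.take (j:ℕ), w.drop ((j:ℕ)+1), ?_⟩ hj1 hj2
  rw [List.append_assoc, List.singleton_append, List.getElem_cons_drop,
    List.take_append_drop]


end PaperDKK
end

section
/- Let H be a finite directed multigraph with a cyclic ample framing, connected, with every source and sink of degree one, no idle edges, and such that every vertex of H is reachable from some source and reaches some sink. Then a route of H is exceptional (compatible with every route of H) if and only if it is monochromatic. -/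
namespace PaperDKK

variable {V E : Type*}

section Aux

variable {V E : Type*}

lemma mono_of_adjacent (tl hd : E → V) (col : E → Col) (w : List E)
    (h : ∀ A (e f : E) B, w = A ++ e :: f :: B → col e = col f) : Mono col w := by
  induction w with
  | nil => exact ⟨Col.red, by simp⟩
  | cons a w ih =>
    obtain ⟨b, hb⟩ := ih (fun A e f B hw => h (a :: A) e f B (by rw [hw]; rfl))
    cases w with
    | nil => exact ⟨col a, by simp⟩
    | cons c w' =>
      refine ⟨b, fun x hx => ?_⟩
      rcases List.mem_cons.1 hx with rfl | hx
      · rw [h [] x c w' rfl]; exact hb c (by simp)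
      · exact hb x hx

lemma exists_walk_of_rtg (tl hd : E → V) {s v : V}
    (h : Relation.ReflTransGen (fun x y => ∃ e : E, tl e = x ∧ hd e = y) s v) :
    ∃ L : List E, List.Chain' (fun e f => hd e = tl f) L ∧
      (∀ e ∈ L.head?, tl e = s) ∧ (∀ e ∈ L.getLast?, hd e = v) ∧ (L = [] → s = v) := by
  induction h with
  | refl => exact ⟨[], List.isChain_nil, by simp, by simp, fun _ => rfl⟩
  | @tail b c _ hbc ih =>
    obtain ⟨e, he1, he2⟩ := hbc
    obtain ⟨L, hc, hh, hl, hn⟩ := ih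
    refine ⟨L ++ [e], ?_, ?_, ?_, by simp⟩
    · unfold List.Chain'; rw [List.isChain_append]
      refine ⟨hc, by simp, fun x hx y hy => ?_⟩
      simp at hy; subst hy; rw [hl x hx, he1]
    · cases L with
      | nil =>
        intro f hf; simp at hf; subst hf; rw [he1, ← hn rfl]
      | cons a L' =>
        intro f hf; simp at hf; subst hf
        exact hh a (by simp)
    · intro f hf
      rw [List.getLast?_concat] at hf
      simp at hf; subst hf; exact he2

lemma glue_srcsnk (tl hd : E → V) {s x y t : V} {p q : E} {L1 L2 : List E}
    (hs : IsSource tl hd s) (ht : IsSink tl hd t)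
    (hc1 : List.Chain' (fun e f => hd e = tl f) L1)
    (hh1 : ∀ e ∈ L1.head?, tl e = s) (hl1 : ∀ e ∈ L1.getLast?, hd e = x)
    (hn1 : L1 = [] → s = x)
    (hc2 : List.Chain' (fun e f => hd e = tl f) L2)
    (hh2 : ∀ e ∈ L2.head?, tl e = y) (hl2 : ∀ e ∈ L2.getLast?, hd e = t)
    (hn2 : L2 = [] → y = t)
    (hp : tl p = x) (hpq : hd p = tl q) (hq : hd q = y) :
    IsSrcSnkWalk tl hd (L1 ++ p :: q :: L2) := by
  refine ⟨⟨by simp, ?_⟩, ?_, ?_⟩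
  · unfold List.Chain'; rw [List.isChain_append]
    refine ⟨hc1, ?_, fun a ha b hb => ?_⟩
    · rw [List.isChain_cons_cons, List.isChain_cons]
      exact ⟨hpq, fun b hb => by rw [hq, ← hh2 b hb], hc2⟩
    · simp at hb; subst hb; rw [hl1 a ha, hp]
  · cases L1 with
    | nil => intro f hf; simp at hf; subst hf; rw [hp, ← hn1 rfl]; exact hs
    | cons a L' => intro f hf; simp at hf; subst hf; rw [hh1 a (by simp)]; exact hs
  · intro f hf
    rw [List.getLast?_append] at hf
    cases L2 with
    | nil => simp at hf; subst hf; rw [hq, hn2 rfl]; exact ht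
    | cons c L2' =>
      have : f ∈ (c :: L2').getLast? := by simpa using hf
      rw [hl2 f this]; exact ht

end Aux

/-- a route is exceptional (compatible with every route) if and
only if it is monochromatic. -/
theorem statement4 {V E : Type*} [Fintype V] [Fintype E] (tl hd : E → V) (col : E → Col)
    (hconn : Connected tl hd) (hdeg : DegreeOneEnds tl hd) (hidle : NoIdleEdges tl hd)
    (hreach : ∀ v : V,
      (∃ s : V, IsSource tl hd s ∧
        Relation.ReflTransGen (fun x y => ∃ e : E, tl e = x ∧ hd e = y) s v) ∧
      (∃ t : V, IsSink tl hd t ∧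
        Relation.ReflTransGen (fun x y => ∃ e : E, tl e = x ∧ hd e = y) v t))
    (hfr : CyclicAmpleFraming tl hd col) :
    ∀ w : List E, IsRoute tl hd w → (Exceptional tl hd col w ↔ Mono col w) := by
  intro w hw
  constructor
  · intro hexc
    rcases hw with hcyc | hss
    · exact hfr.2 w hcyc
    · by_contra hmono
      have hsplit : ¬ ∀ A (e f : E) B, w = A ++ e :: f :: B → col e = col f :=
        fun h => hmono (mono_of_adjacent tl hd col w h)
      push_neg at hsplit
      obtain ⟨A, e, f, B, heq, hne⟩ := hsplit
      have hchain : List.Chain' (fun e f => hd e = tl f) w := hss.1.2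
      have hef : hd e = tl f := by
        rw [heq] at hchain; unfold List.Chain' at hchain; rw [List.isChain_append] at hchain
        exact (List.isChain_cons_cons.1 hchain.2.1).1
      have hint : IsInternal tl hd (hd e) :=
        ⟨fun h => h e rfl, fun h => h f hef.symm⟩
      obtain ⟨⟨pr, ⟨hprh, hprc⟩, _⟩, ⟨pb, ⟨hpbh, hpbc⟩, _⟩, ⟨qr, ⟨hqrt, hqrc⟩, _⟩,
        ⟨qb, ⟨hqbt, hqbc⟩, _⟩⟩ := hfr.1 (hd e) hint
      -- build a source-to-sink walk through in-edge pin and out-edge qout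
      have build : ∀ pin qout : E, hd pin = hd e → tl qout = hd e →
          ∃ L1 L2 : List E, IsSrcSnkWalk tl hd (L1 ++ pin :: qout :: L2) := by
        intro pin qout hpin hqout
        obtain ⟨s, hs, hrs⟩ := (hreach (tl pin)).1
        obtain ⟨t, ht, hrt⟩ := (hreach (hd qout)).2
        obtain ⟨L1, hc1, hh1, hl1, hn1⟩ := exists_walk_of_rtg tl hd hrs
        obtain ⟨L2, hc2, hh2, hl2, hn2⟩ := exists_walk_of_rtg tl hd hrt
        exact ⟨L1, L2, glue_srcsnk tl hd hs ht hc1 hh1 hl1 hn1 hc2 hh2 hl2 hn2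
          rfl (by rw [hpin, hqout]) rfl⟩
      rcases hce : col e with _ | _ <;> rcases hcf : col f with _ | _
      · exact hne (hce.trans hcf.symm)
      · -- e red, f blue : use blue-in pb and red-out qr
        obtain ⟨L1, L2, hsw'⟩ := build pb qr hpbh hqrt
        refine hexc.2 _ (Or.inr hsw') ?_
        refine ⟨hss, hsw', L1, [], L2, A, B, pb, qr, e, f, ?_, hpbh, hpbc, hcf, hqrc, hce⟩
        exact Or.inr ⟨by simp, by simpa using heq⟩
      · -- e blue, f red : use red-in pr and blue-out qb
        obtain ⟨L1, L2, hsw'⟩ := build pr qb hprh hqbt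
        refine hexc.2 _ (Or.inr hsw') ?_
        refine ⟨hss, hsw', A, [], B, L1, L2, e, f, pr, qb, ?_, hprh.symm, hce, hqbc, hcf, hprc⟩
        exact Or.inl ⟨by simpa using heq, by simp⟩
      · exact hne (hce.trans hcf.symm)
  · intro hmono
    refine ⟨hw, fun w' _ hinc => ?_⟩
    obtain ⟨_, _, P, S, Q, P', Q', p, q, p', q', hcase, _, hpb, hq'b, hqr, hp'r⟩ := hinc
    obtain ⟨b, hb⟩ := hmono
    rcases hcase with ⟨h1, _⟩ | ⟨_, h1⟩
    · have h2 := hb p (by rw [h1]; simp)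
      have h3 := hb q (by rw [h1]; simp)
      rw [hpb] at h2; rw [hqr] at h3
      rw [← h2] at h3; exact Col.noConfusion h3
    · have h2 := hb p' (by rw [h1]; simp)
      have h3 := hb q' (by rw [h1]; simp)
      rw [hp'r] at h2; rw [hq'b] at h3
      rw [← h2] at h3; exact Col.noConfusion h3


end PaperDKK
end

section
/- Let H be a finite directed multigraph with a cyclic ample framing. Then every bad route of H (a source-to-sink walk containing some minimal directed cycle as a contiguous subwalk) is incompatible with itself, i.e., there are two decompositions ρ = P·S·Q = P′·S·Q′ of the same walk along a common subwalk S witnessing the incompatibility condition. -/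
namespace PaperDKK

variable {V E : Type*}

section Statement5Aux

variable {tl hd : E → V} {col : E → Col}

lemma col_eq_blue_of_ne_red {c : Col} (h : c ≠ Col.red) : c = Col.blue := by
  cases c <;> simp_all

lemma col_eq_red_of_ne_blue {c : Col} (h : c ≠ Col.blue) : c = Col.red := by
  cases c <;> simp_all

lemma head_congr {α : Type*} {l₁ l₂ : List α} (h₁ : l₁ ≠ []) (h₂ : l₂ ≠ [])
    (h : l₁.head? = l₂.head?) : l₁.head h₁ = l₂.head h₂ := by
  rw [List.head?_eq_head h₁, List.head?_eq_head h₂] at h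
  exact Option.some_inj.mp h

lemma getLast_congr {α : Type*} {l₁ l₂ : List α} (h₁ : l₁ ≠ []) (h₂ : l₂ ≠ [])
    (h : l₁.getLast? = l₂.getLast?) : l₁.getLast h₁ = l₂.getLast h₂ := by
  rw [List.getLast?_eq_getLast h₁, List.getLast?_eq_getLast h₂] at h
  exact Option.some_inj.mp h

/-- Every vertex that is the head of an edge of a minimal cycle is internal. -/
lemma cycle_internal {u : List E} (hu : IsMinCycle tl hd u) :
    ∀ e ∈ u, IsInternal tl hd (hd e) := by
  intro e he
  have hne : u ≠ [] := hu.1.1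
  constructor
  · intro hs; exact hs e rfl
  · intro hk
    obtain ⟨⟨i, hi⟩, rfl⟩ := List.mem_iff_get.mp he
    by_cases h : i + 1 < u.length
    · have := List.isChain_iff_getElem.mp hu.1.2 i (by omega)
      exact hk (u.get ⟨i + 1, h⟩) this.symm
    · have hi' : i = u.length - 1 := by omega
      have hlast : u.get ⟨i, hi⟩ = u.getLast hne := by
        rw [List.getLast_eq_getElem]
        simp [hi']
      have := hu.2.1 (u.getLast hne) (by simp [List.getLast?_eq_getLast hne])
        (u.head hne) (by simp [List.head?_eq_head hne])
      exact hk (u.head hne) (by rw [hlast]; exact this.symm)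

/-- If `T` is a prefix of `u ++ T`, then every element of `T` lies in `u`. -/
lemma mem_of_prefix_pow {u : List E} (hu : u ≠ []) :
    ∀ n (T : List E), T.length ≤ n → T <+: u ++ T → ∀ e ∈ T, e ∈ u := by
  intro n
  induction n with
  | zero =>
    intro T hT _ e he
    have : T = [] := List.length_eq_zero_iff.mp (Nat.le_zero.mp hT)
    simp [this] at he
  | succ n ih =>
    intro T hT hpre e he
    by_cases hle : T.length ≤ u.length
    · have h1 : T = List.take T.length (u ++ T) := List.prefix_iff_eq_take.mp hpre
      rw [List.take_append_of_le_length hle] at h1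
      have : T <+: u := h1 ▸ List.take_prefix _ _
      exact this.subset he
    · push_neg at hle
      have hu' : u <+: T :=
        List.prefix_of_prefix_length_le (List.prefix_append u T) hpre (le_of_lt hle)
      obtain ⟨T', rfl⟩ := hu'
      have hpre' : T' <+: u ++ T' := (List.prefix_append_right_inj u).mp hpre
      have hlen : T'.length ≤ n := by
        have h1 : 1 ≤ u.length := List.length_pos_iff.mpr hu
        have := hT
        simp only [List.length_append] at this
        omega
      rcases List.mem_append.mp he with h | h
      · exact h
      · exact ih T' hlen hpre' e h

/-- Rotating a minimal cycle one step yields a minimal cycle. -/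
lemma rotate_min_cycle {u₀ : List E} {lu : E} (hu : IsMinCycle tl hd (u₀ ++ [lu])) :
    IsMinCycle tl hd (lu :: u₀) := by
  obtain ⟨⟨hne, hch⟩, hcl, hnd⟩ := hu
  have hch0 : List.Chain' (fun e f => hd e = tl f) u₀ := (List.isChain_append.mp hch).1
  have hclose : ∀ f ∈ (u₀ ++ [lu]).head?, hd lu = tl f := by
    intro f hf
    exact hcl lu (by simp [List.getLast?_concat]) f hf
  refine ⟨⟨by simp, ?_⟩, ?_, ?_⟩
  · -- chain
    cases u₀ with
    | nil => exact List.isChain_singleton lu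
    | cons x u₁ =>
      refine List.isChain_cons.mpr ⟨?_, hch0⟩
      intro y hy
      have hx : hd lu = tl x := hclose x (by simp)
      have hxy : x = y := by simpa using hy
      rw [← hxy]; exact hx
  · -- closure
    intro e he f hf
    have hf' : lu = f := by simpa using hf
    rcases List.eq_nil_or_concat u₀ with h0 | ⟨L, x, h0⟩
    · rw [h0] at he
      have he' : lu = e := by simpa using he
      rw [← he', ← hf']
      rw [h0] at hcl
      exact hcl lu (by simp) lu (by simp)
    · rw [h0, List.concat_eq_append] at he
      have hx : (lu :: (L ++ [x])).getLast? = some x := by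
        have h1 : lu :: (L ++ [x]) = (lu :: L) ++ [x] := by simp
        rw [h1, List.getLast?_concat]
      rw [hx] at he
      have he' : x = e := by simpa using he
      rw [← he', ← hf']
      have h2 := List.isChain_append.mp (by rw [h0, List.concat_eq_append] at hch; exact hch)
      exact h2.2.2 x (by simp [List.getLast?_concat]) lu (by simp)
  · -- nodup
    have hperm : List.Perm ((u₀ ++ [lu]).map hd) ((lu :: u₀).map hd) := by
      simp only [List.map_append, List.map_cons, List.map_nil]
      exact List.perm_append_singleton _ _
    exact hperm.nodup hnd

/-- The key induction: if a source-to-sink walk contains a monochromatic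
"cycle power" segment, then it is incompatible with itself. -/
lemma key_lemma (hfr : CyclicAmpleFraming tl hd col) (c : Col) :
    ∀ n (A R B u T : List E),
      A.length + B.length ≤ n →
      IsSrcSnkWalk tl hd (A ++ R ++ B) →
      IsMinCycle tl hd u →
      (∀ e ∈ u, col e = c) →
      R = u ++ T → T <+: R →
      Incompat tl hd col (A ++ R ++ B) (A ++ R ++ B) := by
  intro n
  induction n with
  | zero =>
    intro A R B u T hn hssw hu hcol hR hpre
    -- A = [], contradiction with the source condition
    have hA : A = [] := List.length_eq_zero_iff.mp (by omega)
    subst hA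
    exfalso
    have hune : u ≠ [] := hu.1.1
    have hRne : R ≠ [] := by rw [hR]; simp [hune]
    have hhead : ([] ++ R ++ B : List E).head? = some (R.head hRne) := by
      simp only [List.nil_append]
      rw [List.head?_append_of_ne_nil R hRne, List.head?_eq_head hRne]
    have hsrc := hssw.2.1 (R.head hRne) hhead
    have hheadR : R.head hRne = u.head hune :=
      head_congr hRne hune (by rw [hR, List.head?_append_of_ne_nil u hune])
    have hclose : hd (u.getLast hune) = tl (u.head hune) :=
      hu.2.1 _ (by simp [List.getLast?_eq_getLast hune]) _ (by simp [List.head?_eq_head hune])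
    have hint := cycle_internal hu (u.getLast hune) (List.getLast_mem hune)
    rw [hclose] at hint
    rw [hheadR] at hsrc
    exact hint.1 hsrc
  | succ n ih =>
    intro A R B u T hn hssw hu hcol hR hpre
    have hune : u ≠ [] := hu.1.1
    have hRne : R ≠ [] := by rw [hR]; simp [hune]
    have hRu : ∀ e ∈ R, e ∈ u := by
      intro e he
      rw [hR] at he
      rcases List.mem_append.mp he with h | h
      · exact h
      · have hpre' : T <+: u ++ T := hR ▸ hpre
        exact mem_of_prefix_pow hune T.length T le_rfl hpre' e h
    have hcolR : ∀ e ∈ R, col e = c := fun e he => hcol e (hRu e he)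
    have hclose : hd (u.getLast hune) = tl (u.head hune) :=
      hu.2.1 _ (by simp [List.getLast?_eq_getLast hune]) _ (by simp [List.head?_eq_head hune])
    have hheadR : R.head hRne = u.head hune :=
      head_congr hRne hune (by rw [hR, List.head?_append_of_ne_nil u hune])
    -- A nonempty
    rcases List.eq_nil_or_concat A with hA | ⟨A₀, a, hA⟩
    · subst hA
      exfalso
      have hhead : ([] ++ R ++ B : List E).head? = some (R.head hRne) := by
        simp only [List.nil_append]
        rw [List.head?_append_of_ne_nil R hRne, List.head?_eq_head hRne]
      have hsrc := hssw.2.1 (R.head hRne) hhead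
      have hint := cycle_internal hu (u.getLast hune) (List.getLast_mem hune)
      rw [hclose] at hint
      rw [hheadR] at hsrc
      exact hint.1 hsrc
    -- B nonempty
    cases B with
    | nil =>
      exfalso
      have hlast : (A ++ R ++ ([] : List E)).getLast? = some (R.getLast hRne) := by
        simp only [List.append_nil]
        rw [List.getLast?_append_of_ne_nil A hRne, List.getLast?_eq_getLast hRne]
      have hsnk := hssw.2.2 (R.getLast hRne) hlast
      have hint := cycle_internal hu (R.getLast hRne) (hRu _ (List.getLast_mem hRne))
      exact hint.2 hsnk
    | cons b B₀ =>
      have hchain : List.Chain' (fun e f => hd e = tl f) (A ++ R ++ (b :: B₀)) := hssw.1.2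
      -- hd a = tl (head R)
      have hab : hd a = tl (R.head hRne) := by
        have h1 : List.Chain' (fun e f => hd e = tl f) (A ++ (R ++ (b :: B₀))) := by
          rwa [← List.append_assoc]
        have h2 := (List.isChain_append.mp h1).2.2
        apply h2 a _ (R.head hRne)
        · simp [List.head?_append_of_ne_nil R hRne, List.head?_eq_head hRne]
        · simp [hA, List.concat_eq_append, List.getLast?_concat]
      -- hd (getLast R) = tl b
      have hrb : hd (R.getLast hRne) = tl b := by
        have h2 := (List.isChain_append.mp hchain).2.2
        apply h2 (R.getLast hRne) _ b (by simp)
        simp [List.getLast?_append_of_ne_nil A hRne, List.getLast?_eq_getLast hRne]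
      -- last edge of u
      obtain ⟨u₀, lu, hu0⟩ : ∃ u₀ lu, u = u₀ ++ [lu] := by
        rcases List.eq_nil_or_concat u with h | ⟨u₀, lu, h⟩
        · exact absurd h hune
        · exact ⟨u₀, lu, by simpa using h⟩
      have hlu : u.getLast hune = lu := by
        have h1 := List.getLast?_eq_getLast hune
        have h2 : u.getLast? = some lu := by rw [hu0]; exact List.getLast?_concat (l := u₀)
        rw [h1] at h2
        exact Option.some_inj.mp h2
      have hlumem : lu ∈ u := by rw [hu0]; simp
      have hcollu : col lu = c := hcol lu hlumem
      -- hd a = hd lu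
      have halu : hd a = hd lu := by
        rw [hab, hheadR, ← hclose, hlu]
      -- internality of hd lu
      have hintlu : IsInternal tl hd (hd lu) := cycle_internal hu lu hlumem
      -- T is a proper prefix of R: get the decomposition R = T ++ e₁ :: D₀
      have hTlen : T.length < R.length := by
        rw [hR, List.length_append]
        have : 1 ≤ u.length := List.length_pos_iff.mpr hune
        omega
      obtain ⟨D, hD⟩ := id hpre
      have hDne : D ≠ [] := by
        intro h
        rw [h, List.append_nil] at hD
        rw [hD] at hTlen
        omega
      obtain ⟨e₁, D₀, hD0⟩ : ∃ e₁ D₀, D = e₁ :: D₀ := by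
        cases D with
        | nil => exact absurd rfl hDne
        | cons x xs => exact ⟨x, xs, rfl⟩
      subst hD0
      have hRdecomp : R = T ++ e₁ :: D₀ := hD.symm
      have he₁mem : e₁ ∈ R := by rw [hRdecomp]; simp
      have hcole₁ : col e₁ = c := hcolR e₁ he₁mem
      -- tl e₁ = hd (getLast R)
      have he₁tl : tl e₁ = hd (R.getLast hRne) := by
        cases hT : T with
        | nil =>
          subst hT
          have hRu' : R = u := by rw [hR, List.append_nil]
          have he₁head : e₁ = R.head hRne := by
            have h1 := List.head?_eq_head hRne
            have h2 : R.head? = some e₁ := by rw [hRdecomp]; simp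
            rw [h1] at h2
            exact (Option.some_inj.mp h2).symm
          rw [he₁head]
          have : R.getLast hRne = u.getLast hune :=
            getLast_congr hRne hune (by rw [hRu'])
          rw [this, hheadR, ← hclose]
        | cons t0 T₀ =>
          subst hT
          have hTne : (t0 :: T₀ : List E) ≠ [] := by simp
          -- getLast R = getLast T (T is a suffix of R via R = u ++ T)
          have hlastR : R.getLast hRne = (t0 :: T₀).getLast hTne :=
            getLast_congr hRne hTne
              (by rw [hR, List.getLast?_append_of_ne_nil u hTne])
          -- chain of R gives hd (getLast T) = tl e₁
          have hchR : List.Chain' (fun e f => hd e = tl f) R := by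
            have h1 : List.Chain' (fun e f => hd e = tl f) (A ++ (R ++ (b :: B₀))) := by
              rwa [← List.append_assoc]
            have h2 := (List.isChain_append.mp h1).2.1
            exact (List.isChain_append.mp h2).1
          rw [hRdecomp] at hchR
          have h3 := (List.isChain_append.mp hchR).2.2
          have := h3 ((t0 :: T₀).getLast hTne)
            (by simp [List.getLast?_eq_getLast hTne]) e₁ (by simp)
          rw [hlastR]
          exact this.symm
      have hintR : IsInternal tl hd (hd (R.getLast hRne)) :=
        cycle_internal hu (R.getLast hRne) (hRu _ (List.getLast_mem hRne))
      -- Branch on colours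
      by_cases hca : col a = c
      · -- a = lu; rotate the cycle and recurse with shorter A
        have ha_eq : a = lu := by
          have hv := hfr.1 (hd lu) hintlu
          have hP1 : hd a = hd lu ∧ col a = c := ⟨halu, hca⟩
          have hP2 : hd lu = hd lu ∧ col lu = c := ⟨rfl, hcollu⟩
          cases c with
          | red =>
            obtain ⟨e₀, _, huniq⟩ := hv.1
            rw [huniq a hP1, huniq lu hP2]
          | blue =>
            obtain ⟨e₀, _, huniq⟩ := hv.2.1
            rw [huniq a hP1, huniq lu hP2]
        have hweq : A ++ R ++ (b :: B₀) = A₀ ++ (lu :: R) ++ (b :: B₀) := by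
          rw [hA, ha_eq]; simp
        rw [hweq] at hssw ⊢
        apply ih A₀ (lu :: R) (b :: B₀) (lu :: u₀) (lu :: T) _ hssw
        · exact rotate_min_cycle (hu0 ▸ hu)
        · intro e he
          apply hcol
          rw [hu0]
          rcases List.mem_cons.mp he with h | h <;> simp [h]
        · rw [hR, hu0]; simp
        · exact List.cons_prefix_cons.mpr ⟨rfl, hpre⟩
        · simp only [hA, List.concat_eq_append, List.length_append, List.length_cons,
            List.length_nil] at hn ⊢
          omega
      · by_cases hcb : col b = c
        · -- b = e₁; extend R to the right and recurse with shorter B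
          have hb_eq : b = e₁ := by
            have hv := hfr.1 (hd (R.getLast hRne)) hintR
            have hP1 : tl b = hd (R.getLast hRne) ∧ col b = c := ⟨hrb.symm, hcb⟩
            have hP2 : tl e₁ = hd (R.getLast hRne) ∧ col e₁ = c := ⟨he₁tl, hcole₁⟩
            cases c with
            | red =>
              obtain ⟨e₀, _, huniq⟩ := hv.2.2.1
              rw [huniq b hP1, huniq e₁ hP2]
            | blue =>
              obtain ⟨e₀, _, huniq⟩ := hv.2.2.2
              rw [huniq b hP1, huniq e₁ hP2]
          have hweq : A ++ R ++ (b :: B₀) = A ++ (R ++ [b]) ++ B₀ := by simp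
          rw [hweq] at hssw ⊢
          apply ih A (R ++ [b]) B₀ u (T ++ [b]) _ hssw hu hcol
          · rw [hR]; simp
          · rw [hb_eq]
            have h1 : T ++ [e₁] <+: R := by
              rw [hRdecomp]
              exact (List.prefix_append_right_inj T).mpr
                (List.cons_prefix_cons.mpr ⟨rfl, List.nil_prefix⟩)
            calc T ++ [e₁] <+: R := h1
              _ <+: R ++ [e₁] := List.prefix_append _ _
          · simp only [List.length_cons] at hn
            omega
        · -- both neighbours have the opposite colour: build the incompatibility
          have hca' := hca
          have hcb' := hcb
          refine ⟨hssw, hssw, ?_⟩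
          have hEq1 : A ++ R ++ (b :: B₀) = A₀ ++ a :: (T ++ e₁ :: (D₀ ++ b :: B₀)) := by
            rw [hA, hRdecomp]; simp
          have hEq2 : A ++ R ++ (b :: B₀) = (A ++ u₀) ++ lu :: (T ++ b :: B₀) := by
            rw [hR, hu0]; simp
          cases c with
          | red =>
            -- p = a (blue), q = e₁ (red), p' = lu (red), q' = b (blue)
            exact ⟨A₀, T, D₀ ++ b :: B₀, A ++ u₀, B₀, a, e₁, lu, b,
              Or.inl ⟨hEq1, hEq2⟩, halu,
              col_eq_blue_of_ne_red hca, col_eq_blue_of_ne_red hcb, hcole₁, hcollu⟩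
          | blue =>
            -- p = lu (blue), q = b (red), p' = a (red), q' = e₁ (blue)
            exact ⟨A ++ u₀, T, B₀, A₀, D₀ ++ b :: B₀, lu, b, a, e₁,
              Or.inl ⟨hEq2, hEq1⟩, halu.symm,
              hcollu, hcole₁, col_eq_red_of_ne_blue hcb, col_eq_red_of_ne_blue hca⟩

end Statement5Aux

/-- with a cyclic ample framing, every bad route (a source-to-sink
walk containing a minimal directed cycle as a contiguous subwalk) is
incompatible with itself. -/
theorem statement5 {V E : Type*} [Fintype V] [Fintype E] (tl hd : E → V) (col : E → Col)
    (hfr : CyclicAmpleFraming tl hd col) :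
    ∀ w : List E, IsSrcSnkWalk tl hd w →
      (∃ u : List E, u <:+: w ∧ IsMinCycle tl hd u) →
      Incompat tl hd col w w := by
  intro w hw ⟨u, hinf, hcyc⟩
  obtain ⟨A, B, rfl⟩ := hinf
  obtain ⟨c, hc⟩ := hfr.2 u hcyc
  exact key_lemma hfr c (A.length + B.length) A u B u [] le_rfl hw hcyc hc
    (by simp) (List.nil_prefix)

end PaperDKK
end

section
/- Let (G,F) be a framed DAG. Then every inclusion-maximal clique K of (G,F) uses every edge of G: for each edge e of G there is a route in K traversing e. -/
namespace PaperDKK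

variable {V E : Type*}

/-- A framing of a DAG: for each internal vertex, total orders on its incoming
edges and on its outgoing edges.  We encode these as one partial order on edges
that is total on edges sharing a head (resp. a tail). -/
structure Framing (tl hd : E → V) where
  inLe : E → E → Prop
  outLe : E → E → Prop
  inLe_refl : ∀ e, inLe e e
  inLe_trans : ∀ e f g, inLe e f → inLe f g → inLe e g
  inLe_antisymm : ∀ e f, inLe e f → inLe f e → e = f
  inLe_total : ∀ e f, hd e = hd f → inLe e f ∨ inLe f e
  inLe_head : ∀ e f, inLe e f → hd e = hd f
  outLe_refl : ∀ e, outLe e e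
  outLe_trans : ∀ e f g, outLe e f → outLe f g → outLe e g
  outLe_antisymm : ∀ e f, outLe e f → outLe f e → e = f
  outLe_total : ∀ e f, tl e = tl f → outLe e f ∨ outLe f e
  outLe_tail : ∀ e f, outLe e f → tl e = tl f

/-- The induced strict order on walks ending at a common vertex: compare the
last edges at which the two walks differ (i.e. the edges preceding their longest
common suffix) in the incoming order. -/
def prefLt (tl hd : E → V) (F : Framing tl hd) (P P' : List E) : Prop :=
  ∃ (A A' S : List E) (e e' : E),
    P = A ++ e :: S ∧ P' = A' ++ e' :: S ∧ e ≠ e' ∧ F.inLe e e'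

/-- The induced strict order on walks starting at a common vertex: compare the
first edges at which the two walks differ (i.e. the edges following their
longest common prefix) in the outgoing order. -/
def suffLt (tl hd : E → V) (F : Framing tl hd) (Q Q' : List E) : Prop :=
  ∃ (S B B' : List E) (e e' : E),
    Q = S ++ e :: B ∧ Q' = S ++ e' :: B' ∧ e ≠ e' ∧ F.outLe e e'

/-- Two routes are incompatible (at some common internal vertex `v`) if the
prefix of one at `v` strictly precedes the prefix of the other while its suffix
at `v` strictly follows the suffix of the other. -/
def FIncompat (tl hd : E → V) (F : Framing tl hd) (w w' : List E) : Prop :=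
  ∃ P Q P' Q' : List E,
    w = P ++ Q ∧ w' = P' ++ Q' ∧ P ≠ [] ∧ Q ≠ [] ∧ P' ≠ [] ∧ Q' ≠ [] ∧
    (∃ v : V, IsInternal tl hd v ∧
      (∀ e ∈ P.getLast?, hd e = v) ∧ (∀ e ∈ P'.getLast?, hd e = v)) ∧
    ((prefLt tl hd F P P' ∧ suffLt tl hd F Q' Q) ∨
     (prefLt tl hd F P' P ∧ suffLt tl hd F Q Q'))

/-- A clique of a framed DAG: a set of pairwise compatible routes. -/
def FClique (tl hd : E → V) (F : Framing tl hd) (K : Set (List E)) : Prop :=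
  (∀ w ∈ K, IsSrcSnkWalk tl hd w) ∧
  ∀ w ∈ K, ∀ w' ∈ K, ¬ FIncompat tl hd F w w'


/-! ### Auxiliary machinery for the proof of Statement 8 -/

open List

section Aux

set_option linter.deprecated false

theorem chain'_append {α : Type*} {R : α → α → Prop} {l₁ l₂ : List α} :
    Chain' R (l₁ ++ l₂) ↔ Chain' R l₁ ∧ Chain' R l₂ ∧
      ∀ x ∈ l₁.getLast?, ∀ y ∈ l₂.head?, R x y := isChain_append

theorem chain'_cons' {α : Type*} {R : α → α → Prop} {x : α} {l : List α} :
    Chain' R (x :: l) ↔ (∀ y ∈ head? l, R x y) ∧ Chain' R l := isChain_cons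

theorem chain'_reverse {α : Type*} {R : α → α → Prop} {l : List α} :
    Chain' R (reverse l) ↔ Chain' (fun a b => R b a) l := isChain_reverse

@[simp] theorem chain'_singleton {α : Type*} {R : α → α → Prop} (a : α) :
    Chain' R [a] := isChain_singleton a

theorem _root_.List.Chain'.tail {α : Type*} {R : α → α → Prop} {l : List α}
    (h : Chain' R l) : Chain' R l.tail := IsChain.tail h

theorem _root_.List.Chain'.imp {α : Type*} {R S : α → α → Prop}
    (H : ∀ a b, R a b → S a b) {l : List α} (h : Chain' R l) : Chain' S l := IsChain.imp H h

/-- Generic strict "first difference" order on lists. -/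
def GLt (le : E → E → Prop) (Q Q' : List E) : Prop :=
  ∃ (S B B' : List E) (x y : E), Q = S ++ x :: B ∧ Q' = S ++ y :: B' ∧ x ≠ y ∧ le x y

theorem glt_cons {le : E → E → Prop} {a : E} {l l' : List E} :
    GLt le (a :: l) (a :: l') ↔ GLt le l l' := by
  constructor
  · rintro ⟨S, B, B', x, y, h1, h2, hxy, hle⟩
    cases S with
    | nil =>
      simp only [nil_append, cons.injEq] at h1 h2
      exact absurd (h1.1.symm.trans h2.1) hxy
    | cons s S =>
      simp only [cons_append, cons.injEq] at h1 h2
      exact ⟨S, B, B', x, y, h1.2, h2.2, hxy, hle⟩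
  · rintro ⟨S, B, B', x, y, h1, h2, hxy, hle⟩
    exact ⟨a :: S, B, B', x, y, by simp [h1], by simp [h2], hxy, hle⟩

theorem glt_append {le : E → E → Prop} {C l l' : List E} :
    GLt le (C ++ l) (C ++ l') ↔ GLt le l l' := by
  induction C with
  | nil => simp
  | cons c C ih => simpa [glt_cons] using ih

theorem glt_head {le : E → E → Prop} {x y : E} {B B' : List E} (hxy : x ≠ y) :
    GLt le (x :: B) (y :: B') ↔ le x y := by
  constructor
  · rintro ⟨S, B₁, B₂, u, v, h1, h2, huv, hle⟩
    cases S with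
    | nil =>
      simp only [nil_append, cons.injEq] at h1 h2
      rw [h1.1, h2.1]; exact hle
    | cons s S =>
      simp only [cons_append, cons.injEq] at h1 h2
      exact absurd (h1.1.trans h2.1.symm) hxy
  · intro h
    exact ⟨[], B, B', x, y, rfl, rfl, hxy, h⟩

theorem glt_firstdiff {le : E → E → Prop} {x y : E} {D B B' : List E} (hxy : x ≠ y) :
    GLt le (D ++ x :: B) (D ++ y :: B') ↔ le x y :=
  glt_append.trans (glt_head hxy)

theorem glt_irrefl {le : E → E → Prop} {l : List E} : ¬ GLt le l l := by
  rintro ⟨S, B, B', x, y, h1, h2, hxy, _⟩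
  rw [h1] at h2
  exact hxy (List.cons.inj (List.append_cancel_left h2)).1

theorem glt_trans {le : E → E → Prop}
    (htr : ∀ a b c, le a b → le b c → le a c)
    (hanti : ∀ a b, le a b → le b a → a = b)
    {a b c : List E} (h1 : GLt le a b) (h2 : GLt le b c) : GLt le a c := by
  obtain ⟨S₁, B₁, B₂, x, y, ha, hb, hxy, hxyle⟩ := h1
  obtain ⟨S₂, B₃, B₄, u, v, hb', hc, huv, huvle⟩ := h2
  rcases lt_trichotomy S₁.length S₂.length with hlt | heq | hgt
  · have hpre : S₁ ++ [y] <+: S₂ :=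
      List.prefix_of_prefix_length_le
        ⟨B₂, by simp [hb]⟩ ⟨u :: B₃, hb'.symm⟩ (by simp; omega)
    obtain ⟨t, ht⟩ := hpre
    refine ⟨S₁, B₁, t ++ v :: B₄, x, y, ha, ?_, hxy, hxyle⟩
    rw [hc, ← ht]; simp
  · have : S₁ = S₂ := (List.append_inj (hb.symm.trans hb') heq).1
    subst this
    have h2 := (List.append_cancel_left (hb.symm.trans hb'))
    have hyu : y = u := (List.cons.inj h2).1
    subst hyu
    refine ⟨S₁, B₁, B₄, x, v, ha, hc, ?_, htr _ _ _ hxyle huvle⟩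
    intro hxv; subst hxv
    exact hxy (hanti _ _ hxyle huvle)
  · have hpre : S₂ ++ [u] <+: S₁ :=
      List.prefix_of_prefix_length_le
        ⟨B₃, by simp [hb']⟩ ⟨y :: B₂, hb.symm⟩ (by simp; omega)
    obtain ⟨t, ht⟩ := hpre
    refine ⟨S₂, t ++ x :: B₁, B₄, u, v, ?_, hc, huv, huvle⟩
    rw [ha, ← ht]; simp

theorem glt_asymm {le : E → E → Prop}
    (htr : ∀ a b c, le a b → le b c → le a c)
    (hanti : ∀ a b, le a b → le b a → a = b)
    {a b : List E} (h1 : GLt le a b) (h2 : GLt le b a) : False :=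
  glt_irrefl (glt_trans htr hanti h1 h2)

variable {tl hd : E → V}

theorem suffLt_iff_glt (F : Framing tl hd) {Q Q' : List E} :
    suffLt tl hd F Q Q' ↔ GLt F.outLe Q Q' := Iff.rfl

theorem prefLt_iff_glt (F : Framing tl hd) {P P' : List E} :
    prefLt tl hd F P P' ↔ GLt F.inLe P.reverse P'.reverse := by
  constructor
  · rintro ⟨A, A', S, x, y, h1, h2, hxy, hle⟩
    exact ⟨S.reverse, A.reverse, A'.reverse, x, y, by simp [h1], by simp [h2], hxy, hle⟩
  · rintro ⟨S, B, B', x, y, h1, h2, hxy, hle⟩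
    refine ⟨B.reverse, B'.reverse, S.reverse, x, y, ?_, ?_, hxy, hle⟩
    · rw [← P.reverse_reverse, h1]; simp
    · rw [← P'.reverse_reverse, h2]; simp

theorem suffLt_trans (F : Framing tl hd) {a b c : List E}
    (h1 : suffLt tl hd F a b) (h2 : suffLt tl hd F b c) : suffLt tl hd F a c :=
  glt_trans F.outLe_trans F.outLe_antisymm h1 h2

theorem suffLt_irrefl (F : Framing tl hd) {a : List E} : ¬ suffLt tl hd F a a := glt_irrefl

theorem suffLt_asymm (F : Framing tl hd) {a b : List E}
    (h1 : suffLt tl hd F a b) (h2 : suffLt tl hd F b a) : False :=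
  glt_asymm F.outLe_trans F.outLe_antisymm h1 h2

theorem suffLt_append (F : Framing tl hd) {C l l' : List E} :
    suffLt tl hd F (C ++ l) (C ++ l') ↔ suffLt tl hd F l l' := glt_append

theorem suffLt_firstdiff (F : Framing tl hd) {x y : E} {D B B' : List E} (hxy : x ≠ y) :
    suffLt tl hd F (D ++ x :: B) (D ++ y :: B') ↔ F.outLe x y := glt_firstdiff hxy

theorem suffLt_head (F : Framing tl hd) {x y : E} {B B' : List E} (hxy : x ≠ y) :
    suffLt tl hd F (x :: B) (y :: B') ↔ F.outLe x y := glt_head hxy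

theorem prefLt_trans (F : Framing tl hd) {a b c : List E}
    (h1 : prefLt tl hd F a b) (h2 : prefLt tl hd F b c) : prefLt tl hd F a c := by
  rw [prefLt_iff_glt] at *
  exact glt_trans F.inLe_trans F.inLe_antisymm h1 h2

theorem prefLt_irrefl (F : Framing tl hd) {a : List E} : ¬ prefLt tl hd F a a := by
  rw [prefLt_iff_glt]; exact glt_irrefl

theorem prefLt_asymm (F : Framing tl hd) {a b : List E}
    (h1 : prefLt tl hd F a b) (h2 : prefLt tl hd F b a) : False :=
  prefLt_irrefl F (prefLt_trans F h1 h2)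

theorem prefLt_append_right (F : Framing tl hd) {A B C : List E} :
    prefLt tl hd F (A ++ C) (B ++ C) ↔ prefLt tl hd F A B := by
  rw [prefLt_iff_glt, prefLt_iff_glt, reverse_append, reverse_append]
  exact glt_append

theorem prefLt_lastdiff (F : Framing tl hd) {x y : E} {A B S : List E} (hxy : x ≠ y) :
    prefLt tl hd F (A ++ x :: S) (B ++ y :: S) ↔ F.inLe x y := by
  rw [prefLt_iff_glt]
  have h1 : (A ++ x :: S).reverse = S.reverse ++ x :: A.reverse := by simp
  have h2 : (B ++ y :: S).reverse = S.reverse ++ y :: B.reverse := by simp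
  rw [h1, h2]
  exact glt_firstdiff hxy

/-- Mutual comparability of source-rooted walks ending at a common vertex. -/
theorem pref_total (F : Framing tl hd) :
    ∀ (n : ℕ) (P₁ P₂ : List E), P₁.length + P₂.length ≤ n →
    Chain' (fun a b => hd a = tl b) P₁ → Chain' (fun a b => hd a = tl b) P₂ →
    (∀ x ∈ P₁.head?, IsSource tl hd (tl x)) → (∀ x ∈ P₂.head?, IsSource tl hd (tl x)) →
    P₁ ≠ [] → P₂ ≠ [] →
    (∀ a ∈ P₁.getLast?, ∀ b ∈ P₂.getLast?, hd a = hd b) →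
    P₁ = P₂ ∨ prefLt tl hd F P₁ P₂ ∨ prefLt tl hd F P₂ P₁ := by
  intro n
  induction n with
  | zero =>
    intro P₁ P₂ hlen _ _ _ _ hn₁ _ _
    exact absurd hlen (by cases P₁ <;> simp_all)
  | succ n ih =>
    intro P₁ P₂ hlen hc₁ hc₂ hs₁ hs₂ hn₁ hn₂ hv
    obtain ⟨A, x, hA⟩ : ∃ A x, P₁ = A ++ [x] :=
      ⟨P₁.dropLast, P₁.getLast hn₁, (dropLast_append_getLast hn₁).symm⟩
    obtain ⟨B, y, hB⟩ : ∃ B y, P₂ = B ++ [y] :=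
      ⟨P₂.dropLast, P₂.getLast hn₂, (dropLast_append_getLast hn₂).symm⟩
    subst hA hB
    have hv' : hd x = hd y := hv x (by simp) y (by simp)
    by_cases hxy : x = y
    · subst hxy
      rcases eq_or_ne A [] with hA0 | hA0 <;> rcases eq_or_ne B [] with hB0 | hB0
      · subst hA0 hB0; left; rfl
      · subst hA0
        exfalso
        have hsrc : IsSource tl hd (tl x) := hs₁ x (by simp)
        have hj := (chain'_append.mp hc₂).2.2
        exact hsrc (B.getLast hB0) (hj _ (by simp [getLast?_eq_getLast hB0]) x (by simp))
      · subst hB0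
        exfalso
        have hsrc : IsSource tl hd (tl x) := hs₂ x (by simp)
        have hj := (chain'_append.mp hc₁).2.2
        exact hsrc (A.getLast hA0) (hj _ (by simp [getLast?_eq_getLast hA0]) x (by simp))
      · have hhA : (A ++ [x]).head? = A.head? := by
          cases A with
          | nil => exact absurd rfl hA0
          | cons a A => rfl
        have hhB : (B ++ [x]).head? = B.head? := by
          cases B with
          | nil => exact absurd rfl hB0
          | cons a A => rfl
        have hjA := (chain'_append.mp hc₁).2.2
        have hjB := (chain'_append.mp hc₂).2.2
        rcases ih A B (by simp at hlen ⊢; omega)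
            (chain'_append.mp hc₁).1 (chain'_append.mp hc₂).1
            (by rw [← hhA]; exact hs₁) (by rw [← hhB]; exact hs₂) hA0 hB0
            (by
              intro a ha b hb
              have h1 : hd a = tl x := hjA a ha x (by simp)
              have h2 : hd b = tl x := hjB b hb x (by simp)
              rw [h1, h2]) with heq | h | h
        · left; rw [heq]
        · right; left; exact (prefLt_append_right F (C := [x])).mpr h
        · right; right; exact (prefLt_append_right F (C := [x])).mpr h
    · rcases F.inLe_total x y hv' with h | h
      · right; left; exact ⟨A, B, [], x, y, rfl, rfl, hxy, h⟩
      · right; right; exact ⟨B, A, [], y, x, rfl, rfl, Ne.symm hxy, h⟩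

end Aux

section Cycles

variable {tl hd : E → V}

theorem not_nodup_split {α β : Type*} (f : α → β) :
    ∀ (l : List α), ¬ (l.map f).Nodup →
    ∃ x y l₁ l₂ l₃, l = l₁ ++ (x :: (l₂ ++ (y :: l₃))) ∧ f x = f y := by
  intro l
  induction l with
  | nil => intro h; simp at h
  | cons a t ih =>
    intro h
    by_cases ha : f a ∈ t.map f
    · obtain ⟨y, hy, hfy⟩ := List.mem_map.mp ha
      obtain ⟨t₁, t₂, rfl⟩ := List.append_of_mem hy
      exact ⟨a, y, [], t₁, t₂, by simp, hfy.symm⟩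
    · have ht : ¬ (t.map f).Nodup := by
        intro hnd; exact h (by simp [List.nodup_cons, ha, hnd])
      obtain ⟨x, y, l₁, l₂, l₃, rfl, hfxy⟩ := ih ht
      exact ⟨x, y, a :: l₁, l₂, l₃, by simp, hfxy⟩

/-- Every nonempty closed walk contains a minimal directed cycle. -/
theorem closed_to_minCycle :
    ∀ (n : ℕ) (w : List E), w.length ≤ n → w ≠ [] →
    Chain' (fun a b => hd a = tl b) w →
    (∀ a ∈ w.getLast?, ∀ b ∈ w.head?, hd a = tl b) →
    ∃ c, IsMinCycle tl hd c := by
  intro n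
  induction n with
  | zero => intro w h hne _ _; cases w <;> simp_all
  | succ n ih =>
    intro w hlen hne hch hcl
    by_cases hnd : (w.map hd).Nodup
    · exact ⟨w, ⟨hne, hch⟩, hcl, hnd⟩
    · obtain ⟨x, y, l₁, l₂, l₃, hw, hxy⟩ := not_nodup_split hd w hnd
      have hch₂ : Chain' (fun a b => hd a = tl b) (x :: (l₂ ++ (y :: l₃))) := by
        rw [hw] at hch; exact (chain'_append.mp hch).2.1
      have hch₃ : Chain' (fun a b => hd a = tl b) (l₂ ++ (y :: l₃)) := hch₂.tail
      have hch₄ : Chain' (fun a b => hd a = tl b) (l₂ ++ [y]) := by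
        have heq : l₂ ++ (y :: l₃) = (l₂ ++ [y]) ++ l₃ := by simp
        rw [heq] at hch₃; exact (chain'_append.mp hch₃).1
      refine ih (l₂ ++ [y]) ?_ (by simp) hch₄ ?_
      · have hlw : w.length = l₁.length + l₂.length + l₃.length + 2 := by
          rw [hw]; simp; omega
        simp only [List.length_append, List.length_singleton]
        omega
      · intro a ha b hb
        rw [getLast?_concat] at ha
        simp only [Option.mem_def, Option.some.injEq] at ha
        subst ha
        have hhd : tl b = hd x := by
          cases l₂ with
          | nil =>
            have hb' : y = b := by simpa using hb
            rw [← hb']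
            exact ((chain'_cons'.mp hch₂).1 y (by simp)).symm
          | cons c l₂' =>
            have hb' : c = b := by simpa using hb
            rw [← hb']
            exact ((chain'_cons'.mp hch₂).1 c (by simp)).symm
        rw [hhd, hxy]

/-- In an acyclic graph every walk has no repeated edges. -/
theorem walk_nodup (hacyc : ∀ w : List E, ¬ IsMinCycle tl hd w)
    {w : List E} (hch : Chain' (fun a b => hd a = tl b) w) : w.Nodup := by
  by_contra hnd
  have hnd' : ¬ (w.map id).Nodup := by simpa using hnd
  obtain ⟨x, y, l₁, l₂, l₃, hw, hxy⟩ := not_nodup_split id w hnd'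
  simp only [id] at hxy
  subst hxy
  have hch₂ : Chain' (fun a b => hd a = tl b) (x :: (l₂ ++ (x :: l₃))) := by
    rw [hw] at hch; exact (chain'_append.mp hch).2.1
  have hgrp : x :: (l₂ ++ (x :: l₃)) = (x :: l₂) ++ (x :: l₃) := by simp
  rw [hgrp] at hch₂
  have hcl : ∀ a ∈ (x :: l₂).getLast?, ∀ b ∈ (x :: l₂).head?, hd a = tl b := by
    intro a ha b hb
    have hb' : x = b := by simpa using hb
    rw [← hb']
    exact (chain'_append.mp hch₂).2.2 a ha x (by simp)
  obtain ⟨c, hc⟩ := closed_to_minCycle (x :: l₂).length (x :: l₂) le_rfl (by simp)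
    (chain'_append.mp hch₂).1 hcl
  exact hacyc c hc

/-- The "is an earlier vertex" relation. -/
def rr (tl hd : E → V) : V → V → Prop := fun a b => ∃ x, tl x = a ∧ hd x = b

theorem transGen_walk {a b : V} (h : Relation.TransGen (rr tl hd) a b) :
    ∃ w : List E, w ≠ [] ∧ Chain' (fun a b => hd a = tl b) w ∧
      (∀ x ∈ w.head?, tl x = a) ∧ (∀ x ∈ w.getLast?, hd x = b) := by
  induction h with
  | single h =>
    obtain ⟨x, hx1, hx2⟩ := h
    exact ⟨[x], by simp, by simp, by simpa using hx1, by simpa using hx2⟩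
  | tail _ h ih =>
    obtain ⟨y, hy1, hy2⟩ := h
    obtain ⟨w, hne, hch, hhd, hlast⟩ := ih
    refine ⟨w ++ [y], by simp, ?_, ?_, by simpa using hy2⟩
    · rw [chain'_append]
      refine ⟨hch, by simp, ?_⟩
      intro u hu v hv
      simp only [head?_cons, Option.mem_def, Option.some.injEq] at hv
      subst hv
      rw [hlast u hu, hy1]
    · intro u hu
      apply hhd
      cases w with
      | nil => exact absurd rfl hne
      | cons c w' => simpa using hu

theorem wf_rr [Finite V] (hacyc : ∀ w : List E, ¬ IsMinCycle tl hd w) :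
    WellFounded (rr tl hd) := by
  have hirr : ∀ a, ¬ Relation.TransGen (rr tl hd) a a := by
    intro a h
    obtain ⟨w, hne, hch, hhd, hlast⟩ := transGen_walk h
    obtain ⟨c, hc⟩ := closed_to_minCycle w.length w le_rfl hne hch
      (fun u hu v hv => by rw [hlast u hu, hhd v hv])
    exact hacyc c hc
  have htg : WellFounded (Relation.TransGen (rr tl hd)) :=
    @Finite.wellFounded_of_trans_of_irrefl _ _ _
      ⟨fun _ _ _ => Relation.TransGen.trans⟩ ⟨hirr⟩
  exact Subrelation.wf (fun h => Relation.TransGen.single h) htg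

end Cycles

section MinChain

/-- A finite nonempty pairwise-comparable set has a least element. -/
theorem exists_chain_min {β : Type*} (r : β → β → Prop)
    (htr : ∀ a b c, r a b → r b c → r a c) :
    ∀ (s : Finset β), s.Nonempty → (∀ a ∈ s, ∀ b ∈ s, a = b ∨ r a b ∨ r b a) →
    ∃ m ∈ s, ∀ x ∈ s, m = x ∨ r m x := by
  classical
  intro s
  induction s using Finset.induction_on with
  | empty => intro h _; simp at h
  | @insert a s ha ih =>
    intro _ htot
    rcases s.eq_empty_or_nonempty with rfl | hs
    · refine ⟨a, by simp, ?_⟩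
      intro x hx
      simp only [Finset.mem_insert, Finset.notMem_empty, or_false] at hx
      exact Or.inl hx.symm
    · obtain ⟨m, hm, hmin⟩ := ih hs (fun u hu v hv =>
        htot u (Finset.mem_insert_of_mem hu) v (Finset.mem_insert_of_mem hv))
      rcases htot a (Finset.mem_insert_self a s) m (Finset.mem_insert_of_mem hm)
        with heq | hr | hr
      · refine ⟨m, Finset.mem_insert_of_mem hm, ?_⟩
        intro x hx
        rcases Finset.mem_insert.mp hx with rfl | hx
        · exact Or.inl heq.symm
        · exact hmin x hx
      · refine ⟨a, Finset.mem_insert_self a s, ?_⟩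
        intro x hx
        rcases Finset.mem_insert.mp hx with rfl | hx
        · exact Or.inl rfl
        · rcases hmin x hx with rfl | hx'
          · exact Or.inr hr
          · exact Or.inr (htr _ _ _ hr hx')
      · refine ⟨m, Finset.mem_insert_of_mem hm, ?_⟩
        intro x hx
        rcases Finset.mem_insert.mp hx with rfl | hx
        · exact Or.inr hr
        · exact hmin x hx

theorem exists_chain_min_set {β : Type*} (r : β → β → Prop)
    (htr : ∀ a b c, r a b → r b c → r a c)
    (s : Set β) (hfin : s.Finite) (hne : s.Nonempty)
    (htot : ∀ a ∈ s, ∀ b ∈ s, a = b ∨ r a b ∨ r b a) :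
    ∃ m ∈ s, ∀ x ∈ s, m = x ∨ r m x := by
  classical
  have htot' : ∀ a ∈ hfin.toFinset, ∀ b ∈ hfin.toFinset, a = b ∨ r a b ∨ r b a := by
    intro a ha b hb
    exact htot a (hfin.mem_toFinset.mp ha) b (hfin.mem_toFinset.mp hb)
  obtain ⟨m, hm, hmin⟩ := exists_chain_min r htr hfin.toFinset (by simpa using hne) htot'
  exact ⟨m, hfin.mem_toFinset.mp hm, fun x hx => hmin x (hfin.mem_toFinset.mpr hx)⟩

end MinChain

section Core

variable {tl hd : E → V}

theorem exists_first_diff {α : Type*} :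
    ∀ (l₁ l₂ : List α), ¬ l₁ <+: l₂ → ¬ l₂ <+: l₁ →
    ∃ D x y B₁ B₂, l₁ = D ++ x :: B₁ ∧ l₂ = D ++ y :: B₂ ∧ x ≠ y := by
  intro l₁
  induction l₁ with
  | nil => intro l₂ h _; exact absurd (List.nil_prefix) h
  | cons a t ih =>
    intro l₂ h1 h2
    cases l₂ with
    | nil => exact absurd (List.nil_prefix) h2
    | cons b s =>
      by_cases hab : a = b
      · subst hab
        have h1' : ¬ t <+: s := fun hp => h1 (by simpa [List.cons_prefix_cons] using hp)
        have h2' : ¬ s <+: t := fun hp => h2 (by simpa [List.cons_prefix_cons] using hp)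
        obtain ⟨D, x, y, B₁, B₂, hD1, hD2, hxy⟩ := ih s h1' h2'
        exact ⟨a :: D, x, y, B₁, B₂, by simp [hD1], by simp [hD2], hxy⟩
      · exact ⟨[], a, b, t, s, rfl, rfl, hab⟩

/-- A conflict between two splits of two walks. -/
def Conflict (tl hd : E → V) (F : Framing tl hd) (P₁ Q₁ P₂ Q₂ : List E) : Prop :=
  (prefLt tl hd F P₁ P₂ ∧ suffLt tl hd F Q₂ Q₁) ∨
  (prefLt tl hd F P₂ P₁ ∧ suffLt tl hd F Q₁ Q₂)

/-- `P` is a prefix walk for the edge `e` which can never participate in a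
conflict with a member of `K` on the prefix side. -/
def GoodPre (tl hd : E → V) (F : Framing tl hd) (K : Set (List E)) (e : E) (P : List E) :
    Prop :=
  Chain' (fun a b => hd a = tl b) (P ++ [e]) ∧
  (∀ x ∈ (P ++ [e]).head?, IsSource tl hd (tl x)) ∧
  ∀ X P₁ Q₁ τ P₂ Q₂ v, τ ∈ K → P ++ e :: X = P₁ ++ Q₁ → τ = P₂ ++ Q₂ →
    P₁ ≠ [] → Q₁ ≠ [] → P₂ ≠ [] → Q₂ ≠ [] → P₁.length ≤ P.length →
    IsInternal tl hd v → (∀ a ∈ P₁.getLast?, hd a = v) → (∀ a ∈ P₂.getLast?, hd a = v) →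
    ¬ Conflict tl hd F P₁ Q₁ P₂ Q₂

theorem prefix_data {K : Set (List E)} (hKwalk : ∀ τ ∈ K, IsSrcSnkWalk tl hd τ)
    {τ T R : List E} (hτ : τ ∈ K) (hsp : τ = T ++ R) (hTne : T ≠ []) :
    Chain' (fun a b => hd a = tl b) T ∧ (∀ x ∈ T.head?, IsSource tl hd (tl x)) := by
  constructor
  · have hch := (hKwalk τ hτ).1.2
    rw [hsp] at hch
    exact (chain'_append.mp hch).1
  · intro x hx
    apply (hKwalk τ hτ).2.1
    rw [hsp]
    cases T with
    | nil => exact absurd rfl hTne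
    | cons a t => simpa using hx

/-- The anchored construction of a good prefix when some route of `K` passes
through `tl e`. -/
theorem goodPre_anchor [Fintype E] (F : Framing tl hd) (K : Set (List E))
    (hacyc : ∀ w : List E, ¬ IsMinCycle tl hd w)
    (hKwalk : ∀ τ ∈ K, IsSrcSnkWalk tl hd τ)
    (hKcompat : ∀ τ ∈ K, ∀ τ' ∈ K, ¬ FIncompat tl hd F τ τ')
    (e : E) (he : ∀ τ ∈ K, e ∉ τ)
    (hsrc : ¬ IsSource tl hd (tl e))
    (hcase : ∃ τ ∈ K, ∃ T R, τ = T ++ R ∧ T ≠ [] ∧ R ≠ [] ∧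
      (∀ a ∈ T.getLast?, hd a = tl e)) :
    ∃ P, GoodPre tl hd F K e P := by
  classical
  have hint_e : IsInternal tl hd (tl e) := ⟨hsrc, fun h => h e rfl⟩
  -- the set of prefixes of routes of `K` at `tl e`
  set SS : Set (List E) :=
    {T | ∃ τ ∈ K, ∃ R, τ = T ++ R ∧ T ≠ [] ∧ R ≠ [] ∧ (∀ a ∈ T.getLast?, hd a = tl e)}
    with hSSdef
  have hSSdata : ∀ T ∈ SS, Chain' (fun a b => hd a = tl b) T ∧
      (∀ x ∈ T.head?, IsSource tl hd (tl x)) ∧ T ≠ [] ∧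
      (∀ a ∈ T.getLast?, hd a = tl e) := by
    rintro T ⟨τ, hτ, R, hsp, hTne, _, hTlast⟩
    obtain ⟨h1, h2⟩ := prefix_data hKwalk hτ hsp hTne
    exact ⟨h1, h2, hTne, hTlast⟩
  have hSSfin : SS.Finite := by
    apply (List.finite_length_le E (Fintype.card E)).subset
    rintro T ⟨τ, hτ, R, hsp, _, _, _⟩
    have hnd : τ.Nodup := walk_nodup hacyc (hKwalk τ hτ).1.2
    have hTnd : T.Nodup := (List.sublist_append_left T R).nodup (by rw [← hsp]; exact hnd)
    exact hTnd.length_le_card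
  have hSStot : ∀ a ∈ SS, ∀ b ∈ SS,
      a = b ∨ prefLt tl hd F a b ∨ prefLt tl hd F b a := by
    intro a ha b hb
    obtain ⟨hac, has, hane, hal⟩ := hSSdata a ha
    obtain ⟨hbc, hbs, hbne, hbl⟩ := hSSdata b hb
    exact pref_total F (a.length + b.length) a b le_rfl hac hbc has hbs hane hbne
      (fun u hu w hw => (hal u hu).trans (hbl w hw).symm)
  -- chain condition at `tl e`
  have hfne : ∀ τ ∈ K, ∀ f ∈ τ, f ≠ e := by
    intro τ hτ f hf hfe; exact he τ hτ (hfe ▸ hf)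
  have hCC : ∀ τ ∈ K, ∀ T f R, τ = T ++ f :: R → T ≠ [] →
      (∀ a ∈ T.getLast?, hd a = tl e) → F.outLe f e →
      ∀ τ' ∈ K, ∀ T' f' R', τ' = T' ++ f' :: R' → T' ≠ [] →
      (∀ a ∈ T'.getLast?, hd a = tl e) → F.outLe e f' →
      T = T' ∨ prefLt tl hd F T T' := by
    intro τ hτ T f R hsp hTne hTlast hfe τ' hτ' T' f' R' hsp' hT'ne hT'last hef'
    have hTSS : T ∈ SS := ⟨τ, hτ, f :: R, hsp, hTne, by simp, hTlast⟩
    have hT'SS : T' ∈ SS := ⟨τ', hτ', f' :: R', hsp', hT'ne, by simp, hT'last⟩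
    rcases hSStot T hTSS T' hT'SS with heq | hlt | hgt
    · exact Or.inl heq
    · exact Or.inr hlt
    · exfalso
      have hff' : f ≠ f' := by
        intro h
        subst h
        have : f = e := F.outLe_antisymm f e hfe hef'
        exact hfne τ hτ f (by rw [hsp]; simp) this
      apply hKcompat τ hτ τ' hτ'
      exact ⟨T, f :: R, T', f' :: R', hsp, hsp', hTne, by simp, hT'ne, by simp,
        ⟨tl e, hint_e, hTlast, hT'last⟩,
        Or.inr ⟨hgt, (suffLt_head F hff').mpr (F.outLe_trans f e f' hfe hef')⟩⟩
  set SSplus : Set (List E) :=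
    {T | ∃ τ ∈ K, ∃ f R, τ = T ++ f :: R ∧ T ≠ [] ∧
      (∀ a ∈ T.getLast?, hd a = tl e) ∧ F.outLe e f} with hSSplusdef
  have hplus_sub : SSplus ⊆ SS := by
    rintro T ⟨τ, hτ, f, R, hsp, hTne, hTlast, _⟩
    exact ⟨τ, hτ, f :: R, hsp, hTne, by simp, hTlast⟩
  -- the key choice of the prefix `P` with its anchoring route
  have key : ∃ (P τ₀ Q₀ : List E), τ₀ ∈ K ∧ τ₀ = P ++ Q₀ ∧ P ≠ [] ∧ Q₀ ≠ [] ∧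
      (∀ a ∈ P.getLast?, hd a = tl e) ∧
      Chain' (fun a b => hd a = tl b) P ∧ (∀ x ∈ P.head?, IsSource tl hd (tl x)) ∧
      (∀ τ ∈ K, ∀ T f R, τ = T ++ f :: R → T ≠ [] → (∀ a ∈ T.getLast?, hd a = tl e) →
        (F.outLe e f → P = T ∨ prefLt tl hd F P T) ∧
        (F.outLe f e → T = P ∨ prefLt tl hd F T P)) := by
    by_cases hplus : SSplus.Nonempty
    · obtain ⟨P, hPmem, hPmin⟩ := exists_chain_min_set (prefLt tl hd F)
        (fun a b c => prefLt_trans F) SSplus (hSSfin.subset hplus_sub) hplus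
        (fun a ha b hb => hSStot a (hplus_sub ha) b (hplus_sub hb))
      obtain ⟨τ₀, hτ₀, f₀, R₀, hsp₀, hPne, hPlast, hef₀⟩ := hPmem
      obtain ⟨hPc, hPs⟩ := prefix_data hKwalk hτ₀ hsp₀ hPne
      refine ⟨P, τ₀, f₀ :: R₀, hτ₀, hsp₀, hPne, by simp, hPlast, hPc, hPs, ?_⟩
      intro τ hτ T f R hsp hTne hTlast
      constructor
      · intro hef
        exact hPmin T ⟨τ, hτ, f, R, hsp, hTne, hTlast, hef⟩
      · intro hfe
        exact hCC τ hτ T f R hsp hTne hTlast hfe τ₀ hτ₀ P f₀ R₀ hsp₀ hPne hPlast hef₀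
    · obtain ⟨P, hPmem, hPmax⟩ := exists_chain_min_set (fun a b => prefLt tl hd F b a)
        (fun a b c h1 h2 => prefLt_trans F h2 h1) SS hSSfin
        (by obtain ⟨τ, hτ, T, R, hsp, hTne, hRne, hTlast⟩ := hcase
            exact ⟨T, τ, hτ, R, hsp, hTne, hRne, hTlast⟩)
        (fun a ha b hb => by
          rcases hSStot a ha b hb with h | h | h
          · exact Or.inl h
          · exact Or.inr (Or.inr h)
          · exact Or.inr (Or.inl h))
      obtain ⟨τ₀, hτ₀, R₀, hsp₀, hPne, hR₀ne, hPlast⟩ := hPmem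
      obtain ⟨hPc, hPs⟩ := prefix_data hKwalk hτ₀ hsp₀ hPne
      refine ⟨P, τ₀, R₀, hτ₀, hsp₀, hPne, hR₀ne, hPlast, hPc, hPs, ?_⟩
      intro τ hτ T f R hsp hTne hTlast
      constructor
      · intro hef
        exact absurd ⟨T, ⟨τ, hτ, f, R, hsp, hTne, hTlast, hef⟩⟩ hplus
      · intro _
        rcases hPmax T ⟨τ, hτ, f :: R, hsp, hTne, by simp, hTlast⟩ with h | h
        · exact Or.inl h.symm
        · exact Or.inr h
  obtain ⟨P, τ₀, Q₀, hτ₀K, hτ₀eq, hPne, hQ₀ne, hPlast, hPc, hPs, propB⟩ := key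
  -- `P` is a good prefix
  refine ⟨P, ?_, ?_, ?_⟩
  · rw [chain'_append]
    refine ⟨hPc, by simp, ?_⟩
    intro a ha b hb
    have hb' : e = b := by simpa using hb
    rw [← hb']
    exact hPlast a ha
  · intro x hx
    apply hPs
    cases P with
    | nil => exact absurd rfl hPne
    | cons a t => simpa using hx
  · intro X P₁ Q₁ τ P₂ Q₂ v hτ hsplit hτsp hP₁ hQ₁ hP₂ hQ₂ hlen hint hv1 hv2 hconf
    obtain ⟨C, hPC'⟩ : P₁ <+: P :=
      List.prefix_of_prefix_length_le ⟨Q₁, hsplit.symm⟩ ⟨e :: X, rfl⟩ hlen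
    have hPC : P = P₁ ++ C := hPC'.symm
    have hQ₁eq : Q₁ = C ++ e :: X := by
      have hcan : P₁ ++ (C ++ e :: X) = P₁ ++ Q₁ := by
        rw [← hsplit, hPC]; simp
      exact (List.append_cancel_left hcan).symm
    by_cases hCnil : C = []
    · -- the split is exactly at `tl e`
      have hP₁P : P₁ = P := by rw [hPC, hCnil, List.append_nil]
      have hveq : v = tl e := by
        have h1 := hv1 (P₁.getLast hP₁) (by simp [getLast?_eq_getLast hP₁])
        have h2 := hPlast (P₁.getLast hP₁)
          (by rw [← hP₁P]; simp [getLast?_eq_getLast hP₁])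
        rw [← h1, h2]
      obtain ⟨f, R, rfl⟩ : ∃ f R, Q₂ = f :: R := by
        cases Q₂ with
        | nil => exact absurd rfl hQ₂
        | cons f R => exact ⟨f, R, rfl⟩
      have hfe : f ≠ e := hfne τ hτ f (by rw [hτsp]; simp)
      have hpropB := propB τ hτ P₂ f R hτsp hP₂
        (fun a ha => (hv2 a ha).trans hveq)
      rw [hQ₁eq, hCnil, List.nil_append] at hconf
      rcases hconf with ⟨hpre, hsuf⟩ | ⟨hpre, hsuf⟩
      · have hofe : F.outLe f e := (suffLt_head F hfe).mp hsuf
        rw [hP₁P] at hpre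
        rcases hpropB.2 hofe with heq | hlt
        · exact prefLt_irrefl F (heq ▸ hpre)
        · exact prefLt_asymm F hpre hlt
      · have hoef : F.outLe e f := (suffLt_head F (Ne.symm hfe)).mp hsuf
        rw [hP₁P] at hpre
        rcases hpropB.1 hoef with heq | hlt
        · exact prefLt_irrefl F (heq ▸ hpre)
        · exact prefLt_asymm F hpre hlt
    · -- the split is strictly before `tl e`
      have hlastC : ∀ a ∈ C.getLast?, hd a = tl e := by
        intro a ha
        apply hPlast
        rw [hPC, getLast?_append_of_ne_nil _ hCnil]
        exact ha
      have hτchain := (hKwalk τ hτ).1.2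
      have hnp1 : ¬ (C ++ [e]) <+: Q₂ := by
        rintro ⟨t, ht⟩
        apply he τ hτ
        rw [hτsp, ← ht]
        simp
      have hnp2 : ¬ Q₂ <+: (C ++ [e]) := by
        rintro ⟨t, ht⟩
        have heQ₂ : e ∉ Q₂ := fun hmem => he τ hτ (by rw [hτsp]; simp [hmem])
        have hsnkτ : IsSink tl hd (hd (Q₂.getLast hQ₂)) := by
          apply (hKwalk τ hτ).2.2
          rw [hτsp, getLast?_append_of_ne_nil _ hQ₂]
          simp [getLast?_eq_getLast hQ₂]
        rcases eq_or_ne t [] with rfl | htne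
        · rw [List.append_nil] at ht
          apply heQ₂
          rw [ht]
          simp
        · obtain ⟨t', z, rfl⟩ : ∃ t' z, t = t' ++ [z] :=
            ⟨t.dropLast, t.getLast htne, (dropLast_append_getLast htne).symm⟩
          have hCz := List.append_inj'
            (show (Q₂ ++ t') ++ [z] = C ++ [e] by rw [← ht]; simp)
            (by rfl)
          obtain ⟨hC2', _⟩ := hCz
          have hC2 : C = Q₂ ++ t' := hC2'.symm
          rcases eq_or_ne t' [] with rfl | ht'ne
          · -- Q₂ = C, ends at `tl e` which is not a sink
            rw [List.append_nil] at hC2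
            apply hsnkτ e
            have := hlastC (Q₂.getLast hQ₂)
              (by rw [hC2]; simp [getLast?_eq_getLast hQ₂])
            rw [this]
          · -- last of Q₂ has an outgoing edge inside C
            obtain ⟨y, t'', rfl⟩ : ∃ y t'', t' = y :: t'' := by
              cases t' with
              | nil => exact absurd rfl ht'ne
              | cons y t'' => exact ⟨y, t'', rfl⟩
            have hCchain : Chain' (fun a b => hd a = tl b) C := by
              have hch := hPc
              rw [hPC] at hch
              exact (chain'_append.mp hch).2.1
            rw [hC2] at hCchain
            have hrel := (chain'_append.mp hCchain).2.2 (Q₂.getLast hQ₂)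
              (by simp [getLast?_eq_getLast hQ₂]) y (by simp)
            exact hsnkτ y hrel.symm
      obtain ⟨D, x, y, B₁, B₂, hCe, hQ₂d, hxy⟩ := exists_first_diff (C ++ [e]) Q₂ hnp1 hnp2
      have hDle : D.length ≤ C.length := by
        have := congrArg List.length hCe
        simp at this
        omega
      by_cases hDeq : D.length = C.length
      · -- the other route also passes through `tl e`
        obtain ⟨hCD, hxB⟩ := List.append_inj hCe hDeq.symm
        obtain ⟨hex, -⟩ := List.cons.inj hxB
        rw [← hCD] at hQ₂d
        have hye : y ≠ e := fun h => hxy (hex.symm.trans h.symm)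
        have hTsp : τ = (P₂ ++ C) ++ y :: B₂ := by rw [hτsp, hQ₂d]; simp
        have hTne' : P₂ ++ C ≠ [] := by simp [hP₂]
        have hTlast' : ∀ a ∈ (P₂ ++ C).getLast?, hd a = tl e := by
          intro a ha
          apply hlastC
          rwa [getLast?_append_of_ne_nil _ hCnil] at ha
        have hpropB := propB τ hτ (P₂ ++ C) y B₂ hTsp hTne' hTlast'
        rw [hQ₁eq, hQ₂d] at hconf
        rcases hconf with ⟨hpre, hsuf⟩ | ⟨hpre, hsuf⟩
        · have hoye : F.outLe y e := (suffLt_firstdiff F hye).mp hsuf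
          have hPT : prefLt tl hd F P (P₂ ++ C) := by
            rw [hPC]; exact (prefLt_append_right F).mpr hpre
          rcases hpropB.2 hoye with heq | hlt
          · exact prefLt_irrefl F (heq ▸ hPT)
          · exact prefLt_asymm F hPT hlt
        · have hoey : F.outLe e y := (suffLt_firstdiff F (Ne.symm hye)).mp hsuf
          have hPT : prefLt tl hd F (P₂ ++ C) P := by
            rw [hPC]; exact (prefLt_append_right F).mpr hpre
          rcases hpropB.1 hoey with heq | hlt
          · exact prefLt_irrefl F (heq ▸ hPT)
          · exact prefLt_asymm F hPT hlt
      · -- the split point of the other route is inside `C`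
        have hDlt : D.length < C.length := lt_of_le_of_ne hDle hDeq
        have hDpre : D ++ [x] <+: C := by
          apply List.prefix_of_prefix_length_le (l₃ := C ++ [e]) _ ⟨[e], rfl⟩ _
          · exact ⟨B₁, by rw [hCe]; simp⟩
          · simp
            omega
        obtain ⟨C₃, hC₃⟩ := hDpre
        have hCds : C = D ++ x :: C₃ := by rw [← hC₃]; simp
        have hτ₀sp : τ₀ = P₁ ++ (C ++ Q₀) := by rw [hτ₀eq, hPC]; simp
        have hCQne : C ++ Q₀ ≠ [] := by simp [hCnil]
        have hCQd : C ++ Q₀ = D ++ x :: (C₃ ++ Q₀) := by rw [hCds]; simp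
        have hQ₁d : Q₁ = D ++ x :: (C₃ ++ e :: X) := by rw [hQ₁eq, hCds]; simp
        rcases hconf with ⟨hpre, hsuf⟩ | ⟨hpre, hsuf⟩
        · have hoyx : F.outLe y x := by
            rw [hQ₂d, hQ₁d] at hsuf
            exact (suffLt_firstdiff F (Ne.symm hxy)).mp hsuf
          have hsuf' : suffLt tl hd F Q₂ (C ++ Q₀) := by
            rw [hQ₂d, hCQd]
            exact (suffLt_firstdiff F (Ne.symm hxy)).mpr hoyx
          exact hKcompat τ₀ hτ₀K τ hτ
            ⟨P₁, C ++ Q₀, P₂, Q₂, hτ₀sp, hτsp, hP₁, hCQne, hP₂, hQ₂,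
              ⟨v, hint, hv1, hv2⟩, Or.inl ⟨hpre, hsuf'⟩⟩
        · have hoxy : F.outLe x y := by
            rw [hQ₂d, hQ₁d] at hsuf
            exact (suffLt_firstdiff F hxy).mp hsuf
          have hsuf' : suffLt tl hd F (C ++ Q₀) Q₂ := by
            rw [hQ₂d, hCQd]
            exact (suffLt_firstdiff F hxy).mpr hoxy
          exact hKcompat τ₀ hτ₀K τ hτ
            ⟨P₁, C ++ Q₀, P₂, Q₂, hτ₀sp, hτsp, hP₁, hCQne, hP₂, hQ₂,
              ⟨v, hint, hv1, hv2⟩, Or.inr ⟨hpre, hsuf'⟩⟩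

end Core

section Induction

variable {tl hd : E → V}

theorem exists_goodPre [Fintype V] [Fintype E] (F : Framing tl hd) (K : Set (List E))
    (hacyc : ∀ w : List E, ¬ IsMinCycle tl hd w)
    (hKwalk : ∀ τ ∈ K, IsSrcSnkWalk tl hd τ)
    (hKcompat : ∀ τ ∈ K, ∀ τ' ∈ K, ¬ FIncompat tl hd F τ τ') :
    ∀ e : E, (∀ τ ∈ K, e ∉ τ) → ∃ P, GoodPre tl hd F K e P := by
  classical
  have hwf := wf_rr (tl := tl) (hd := hd) hacyc
  suffices H : ∀ u : V, ∀ e : E, tl e = u → (∀ τ ∈ K, e ∉ τ) → ∃ P, GoodPre tl hd F K e P by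
    intro e he
    exact H (tl e) e rfl he
  intro u
  induction u using WellFounded.induction hwf with
  | _ u ih =>
  intro e htl he
  subst htl
  by_cases hsrc : IsSource tl hd (tl e)
  · refine ⟨[], by simp, ?_, ?_⟩
    · intro x hx
      have hx' : e = x := by simpa using hx
      rw [← hx']
      exact hsrc
    · intro X P₁ Q₁ τ P₂ Q₂ v _ _ _ hP₁ _ _ _ hlen _ _ _
      simp only [List.length_nil, Nat.le_zero, List.length_eq_zero_iff] at hlen
      exact absurd hlen hP₁
  · by_cases hcase : ∃ τ ∈ K, ∃ T R, τ = T ++ R ∧ T ≠ [] ∧ R ≠ [] ∧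
        (∀ a ∈ T.getLast?, hd a = tl e)
    · exact goodPre_anchor F K hacyc hKwalk hKcompat e he hsrc hcase
    · -- no route of `K` passes through `tl e`: step back along an incoming edge
      obtain ⟨g, hg⟩ : ∃ g, hd g = tl e := by
        by_contra h
        push_neg at h
        exact hsrc h
      have hge : ∀ τ ∈ K, g ∉ τ := by
        intro τ hτ hgτ
        obtain ⟨A, B, hAB⟩ := List.append_of_mem hgτ
        have hBne : B ≠ [] := by
          rintro rfl
          have hsnk := (hKwalk τ hτ).2.2 g (by rw [hAB]; simp [getLast?_concat])
          rw [hg] at hsnk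
          exact hsnk e rfl
        apply hcase
        refine ⟨τ, hτ, A ++ [g], B, by rw [hAB]; simp, by simp, hBne, ?_⟩
        intro a ha
        rw [getLast?_concat] at ha
        have ha' : g = a := by simpa using ha
        rw [← ha']
        exact hg
      obtain ⟨Pg, hPgc, hPgs, hPgconf⟩ := ih (tl g) ⟨g, rfl, hg⟩ g rfl hge
      refine ⟨Pg ++ [g], ?_, ?_, ?_⟩
      · have hgrp : (Pg ++ [g]) ++ [e] = (Pg ++ [g]) ++ [e] := rfl
        rw [chain'_append]
        refine ⟨hPgc, by simp, ?_⟩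
        intro a ha b hb
        have hb' : e = b := by simpa using hb
        rw [getLast?_concat] at ha
        have ha' : g = a := by simpa using ha
        rw [← hb', ← ha']
        exact hg
      · intro x hx
        apply hPgs
        cases Pg with
        | nil => simpa using hx
        | cons a t => simpa using hx
      · intro X P₁ Q₁ τ P₂ Q₂ v hτ hsplit hτsp hP₁ hQ₁ hP₂ hQ₂ hlen hint hv1 hv2 hconf
        have hlen' : P₁.length ≤ Pg.length + 1 := by simpa using hlen
        rcases eq_or_lt_of_le hlen' with heq | hlt
        · -- split exactly at `tl e`: impossible since no route of `K` passes there
          have hP₁eq : P₁ = Pg ++ [g] := by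
            obtain ⟨C, hPC'⟩ : P₁ <+: Pg ++ [g] :=
              List.prefix_of_prefix_length_le ⟨Q₁, hsplit.symm⟩ ⟨e :: X, rfl⟩
                (by simp [heq])
            have hClen : C.length = 0 := by
              have := congrArg List.length hPC'
              simp at this
              omega
            rw [List.length_eq_zero_iff] at hClen
            rw [hClen, List.append_nil] at hPC'
            exact hPC'
          have hveq : v = tl e := by
            have h1 := hv1 g (by rw [hP₁eq]; simp [getLast?_concat])
            rw [← h1, hg]
          apply hcase
          exact ⟨τ, hτ, P₂, Q₂, hτsp, hP₂, hQ₂, fun a ha => (hv2 a ha).trans hveq⟩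
        · exact hPgconf (e :: X) P₁ Q₁ τ P₂ Q₂ v hτ
            (by rw [show Pg ++ g :: e :: X = (Pg ++ [g]) ++ e :: X by simp]; exact hsplit)
            hτsp hP₁ hQ₁ hP₂ hQ₂ (by omega) hint hv1 hv2 hconf

end Induction

section Reversal

variable {tl hd : E → V}

/-- The reversed framing on the reversed graph. -/
def Framing.rev (F : Framing tl hd) : Framing hd tl where
  inLe := F.outLe
  outLe := F.inLe
  inLe_refl := F.outLe_refl
  inLe_trans := F.outLe_trans
  inLe_antisymm := F.outLe_antisymm
  inLe_total := F.outLe_total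
  inLe_head := F.outLe_tail
  outLe_refl := F.inLe_refl
  outLe_trans := F.inLe_trans
  outLe_antisymm := F.inLe_antisymm
  outLe_total := F.inLe_total
  outLe_tail := F.inLe_head

theorem suffLt_rev (F : Framing tl hd) {Q Q' : List E} :
    suffLt hd tl F.rev Q Q' ↔ prefLt tl hd F Q.reverse Q'.reverse := by
  rw [suffLt_iff_glt, prefLt_iff_glt, reverse_reverse, reverse_reverse]
  exact Iff.rfl

theorem prefLt_rev (F : Framing tl hd) {P P' : List E} :
    prefLt hd tl F.rev P P' ↔ suffLt tl hd F P.reverse P'.reverse := by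
  rw [prefLt_iff_glt, suffLt_iff_glt]
  exact Iff.rfl

theorem isInternal_rev {v : V} : IsInternal hd tl v ↔ IsInternal tl hd v := by
  constructor <;> rintro ⟨a, b⟩ <;> exact ⟨b, a⟩

theorem chain'_rev_walk {w : List E} :
    Chain' (fun a b => tl a = hd b) w.reverse ↔ Chain' (fun a b => hd a = tl b) w := by
  rw [chain'_reverse]
  constructor <;> exact fun h => h.imp (fun _ _ hab => hab.symm)

theorem srcsnk_rev {w : List E} (h : IsSrcSnkWalk tl hd w) :
    IsSrcSnkWalk hd tl w.reverse := by
  obtain ⟨⟨hne, hch⟩, hsrc, hsnk⟩ := h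
  refine ⟨⟨by simpa using hne, ?_⟩, ?_, ?_⟩
  · exact chain'_rev_walk.mpr hch
  · intro x hx
    rw [head?_reverse] at hx
    exact hsnk x hx
  · intro x hx
    rw [getLast?_reverse] at hx
    exact hsrc x hx

theorem minCycle_rev (hacyc : ∀ w : List E, ¬ IsMinCycle tl hd w) :
    ∀ w : List E, ¬ IsMinCycle hd tl w := by
  intro w hmc
  obtain ⟨⟨hne, hch⟩, hcl, _⟩ := hmc
  have hclosed : ∀ a ∈ w.reverse.getLast?, ∀ b ∈ w.reverse.head?, hd a = tl b := by
    intro a ha b hb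
    rw [getLast?_reverse] at ha
    rw [head?_reverse] at hb
    exact (hcl b hb a ha).symm
  obtain ⟨c, hc⟩ := closed_to_minCycle (tl := tl) (hd := hd)
    w.reverse.length w.reverse le_rfl (by simpa using hne)
    ((chain'_rev_walk (tl := hd) (hd := tl)).mpr hch) hclosed
  exact hacyc c hc

theorem fincompat_rev (F : Framing tl hd) {w w' : List E}
    (hw : Chain' (fun a b => hd a = tl b) w)
    (hw' : Chain' (fun a b => hd a = tl b) w')
    (h : FIncompat hd tl F.rev w.reverse w'.reverse) : FIncompat tl hd F w w' := by
  obtain ⟨A, B, A', B', h1, h2, hA, hB, hA', hB', ⟨v, hint, hvA, hvA'⟩, hor⟩ := h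
  have hw1 : w = B.reverse ++ A.reverse := by
    rw [← w.reverse_reverse, h1]; simp
  have hw2 : w' = B'.reverse ++ A'.reverse := by
    rw [← w'.reverse_reverse, h2]; simp
  refine ⟨B.reverse, A.reverse, B'.reverse, A'.reverse, hw1, hw2,
    by simpa using hB, by simpa using hA, by simpa using hB', by simpa using hA',
    ⟨v, isInternal_rev.mp hint, ?_, ?_⟩, ?_⟩
  · intro a ha
    rw [getLast?_reverse] at ha
    have hchrev : Chain' (fun a b => tl a = hd b) (A ++ B) := by
      rw [← h1]; exact chain'_rev_walk.mpr hw
    have hjunc := (chain'_append.mp hchrev).2.2 (A.getLast hA)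
      (by simp [getLast?_eq_getLast hA]) a ha
    rw [← hjunc]
    exact hvA (A.getLast hA) (by simp [getLast?_eq_getLast hA])
  · intro a ha
    rw [getLast?_reverse] at ha
    have hchrev : Chain' (fun a b => tl a = hd b) (A' ++ B') := by
      rw [← h2]; exact chain'_rev_walk.mpr hw'
    have hjunc := (chain'_append.mp hchrev).2.2 (A'.getLast hA')
      (by simp [getLast?_eq_getLast hA']) a ha
    rw [← hjunc]
    exact hvA' (A'.getLast hA') (by simp [getLast?_eq_getLast hA'])
  · rcases hor with ⟨hp, hs⟩ | ⟨hp, hs⟩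
    · exact Or.inr ⟨(suffLt_rev F).mp hs, (prefLt_rev F).mp hp⟩
    · exact Or.inl ⟨(suffLt_rev F).mp hs, (prefLt_rev F).mp hp⟩

theorem fincompat_symm {F : Framing tl hd} {w w' : List E}
    (h : FIncompat tl hd F w w') : FIncompat tl hd F w' w := by
  obtain ⟨P, Q, P', Q', h1, h2, hP, hQ, hP', hQ', ⟨v, hint, hv1, hv2⟩, hor⟩ := h
  exact ⟨P', Q', P, Q, h2, h1, hP', hQ', hP, hQ, ⟨v, hint, hv2, hv1⟩,
    hor.elim (fun x => Or.inr x) (fun x => Or.inl x)⟩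

theorem fincompat_self {F : Framing tl hd}
    (hacyc : ∀ w : List E, ¬ IsMinCycle tl hd w) {w : List E}
    (hch : Chain' (fun a b => hd a = tl b) w) : ¬ FIncompat tl hd F w w := by
  rintro ⟨P₁, Q₁, P₂, Q₂, h1, h2, hP₁, hQ₁, hP₂, hQ₂, ⟨v, hint, hv1, hv2⟩, hor⟩
  have main : ∀ (A B A' B' : List E), w = A ++ B → w = A' ++ B' → A ≠ [] → A' ≠ [] →
      A.length ≤ A'.length → (∀ a ∈ A.getLast?, hd a = v) →
      (∀ a ∈ A'.getLast?, hd a = v) → A = A' := by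
    intro A B A' B' hA hA' hAne hA'ne hle hva hva'
    obtain ⟨D, hD⟩ : A <+: A' :=
      List.prefix_of_prefix_length_le ⟨B, hA.symm⟩ ⟨B', hA'.symm⟩ hle
    rcases eq_or_ne D [] with rfl | hDne
    · rw [List.append_nil] at hD; exact hD
    · exfalso
      have hchA' : Chain' (fun a b => hd a = tl b) A' := by
        have hh := hch; rw [hA'] at hh; exact (chain'_append.mp hh).1
      rw [← hD] at hchA'
      have hj := (chain'_append.mp hchA').2.2 (A.getLast hAne)
        (by simp [getLast?_eq_getLast hAne]) (D.head hDne)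
        (by simp [head?_eq_head hDne])
      have hlastD : hd (D.getLast hDne) = v := by
        apply hva'
        rw [← hD, getLast?_append_of_ne_nil _ hDne]
        simp [getLast?_eq_getLast hDne]
      have hheadD : tl (D.head hDne) = v := by
        rw [← hj]
        exact hva _ (by simp [getLast?_eq_getLast hAne])
      have hclosed : ∀ a ∈ D.getLast?, ∀ b ∈ D.head?, hd a = tl b := by
        intro a ha b hb
        have ha' : D.getLast hDne = a := by
          simpa [getLast?_eq_getLast hDne] using ha
        have hb' : D.head hDne = b := by
          simpa [head?_eq_head hDne] using hb
        rw [← ha', ← hb', hlastD, hheadD]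
      obtain ⟨c, hc⟩ := closed_to_minCycle (tl := tl) (hd := hd) D.length D le_rfl hDne
        (chain'_append.mp hchA').2.1 hclosed
      exact hacyc c hc
  rcases le_total P₁.length P₂.length with hle | hle
  · have heq := main P₁ Q₁ P₂ Q₂ h1 h2 hP₁ hP₂ hle hv1 hv2
    rcases hor with ⟨hp, _⟩ | ⟨hp, _⟩
    · exact prefLt_irrefl F (heq ▸ hp)
    · exact prefLt_irrefl F (heq ▸ hp)
  · have heq := main P₂ Q₂ P₁ Q₁ h2 h1 hP₂ hP₁ hle hv2 hv1
    rcases hor with ⟨hp, _⟩ | ⟨hp, _⟩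
    · exact prefLt_irrefl F (heq ▸ hp)
    · exact prefLt_irrefl F (heq ▸ hp)

end Reversal

/-- in a framed DAG, every inclusion-maximal clique uses every
edge of the graph. -/
theorem statement8 {V E : Type*} [Fintype V] [Fintype E] (tl hd : E → V)
    (hacyc : ∀ w : List E, ¬ IsMinCycle tl hd w)
    (hconn : Connected tl hd) (hdeg : DegreeOneEnds tl hd) (hidle : NoIdleEdges tl hd)
    (F : Framing tl hd)
    (K : Set (List E)) (hK : FClique tl hd F K)
    (hmax : ∀ K' : Set (List E), FClique tl hd F K' → K ⊆ K' → K' = K) :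
    ∀ e : E, ∃ w ∈ K, e ∈ w := by
  classical
  intro e
  by_cases hcov : ∃ w ∈ K, e ∈ w
  · exact hcov
  push_neg at hcov
  obtain ⟨hKwalks, hKcomp⟩ := hK
  obtain ⟨P, hPchain, hPsrc, hPconf⟩ := exists_goodPre F K hacyc hKwalks hKcomp e hcov
  have hacyc' := minCycle_rev hacyc
  set K' : Set (List E) := (fun l => l.reverse) '' K with hK'def
  have hK'walk : ∀ τ ∈ K', IsSrcSnkWalk hd tl τ := by
    rintro τ' ⟨τ, hτ, rfl⟩
    exact srcsnk_rev (hKwalks τ hτ)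
  have hK'comp : ∀ τ ∈ K', ∀ τ'' ∈ K', ¬ FIncompat hd tl F.rev τ τ'' := by
    rintro _ ⟨τ₁, h₁, rfl⟩ _ ⟨τ₂, h₂, rfl⟩ hinc
    exact hKcomp τ₁ h₁ τ₂ h₂
      (fincompat_rev F (hKwalks τ₁ h₁).1.2 (hKwalks τ₂ h₂).1.2 hinc)
  have he' : ∀ τ ∈ K', e ∉ τ := by
    rintro _ ⟨τ, hτ, rfl⟩ hmem
    exact hcov τ hτ (by simpa using hmem)
  obtain ⟨Qr, hQrchain, hQrsrc, hQrconf⟩ :=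
    exists_goodPre (tl := hd) (hd := tl) F.rev K' hacyc' hK'walk hK'comp e he'
  set Q : List E := Qr.reverse with hQdef
  set ρ : List E := P ++ e :: Q with hρdef
  have hQr_rev : Q.reverse = Qr := by simp [hQdef]
  have hchainQ : Chain' (fun a b => hd a = tl b) (e :: Q) := by
    have h2 : Chain' (fun a b => hd a = tl b) ((Qr ++ [e]).reverse) :=
      (chain'_rev_walk (tl := hd) (hd := tl)).mpr hQrchain
    have hrevQ : (Qr ++ [e]).reverse = e :: Q := by simp [hQdef]
    rwa [hrevQ] at h2
  have hρchain : Chain' (fun a b => hd a = tl b) ρ := by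
    rw [hρdef, chain'_append]
    refine ⟨(chain'_append.mp hPchain).1, hchainQ, ?_⟩
    intro a ha b hb
    have hb' : e = b := by simpa using hb
    rw [← hb']
    exact (chain'_append.mp hPchain).2.2 a ha e (by simp)
  have hρne : ρ ≠ [] := by simp [hρdef]
  have hρsrcsnk : IsSrcSnkWalk tl hd ρ := by
    refine ⟨⟨hρne, hρchain⟩, ?_, ?_⟩
    · intro x hx
      cases P with
      | nil =>
        have hx' : e = x := by simpa [hρdef] using hx
        rw [← hx']
        exact hPsrc e (by simp)
      | cons p P' =>
        have hx' : p = x := by simpa [hρdef] using hx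
        rw [← hx']
        exact hPsrc p (by simp)
    · intro x hx
      rcases eq_or_ne Qr [] with hQrnil | hQrne
      · have hQnil : Q = [] := by simp [hQdef, hQrnil]
        have hx' : e = x := by
          rw [hρdef, hQnil] at hx
          simpa using hx
        rw [← hx']
        exact hQrsrc e (by simp [hQrnil])
      · have hQne : Q ≠ [] := by simp [hQdef, hQrne]
        have h1x : x ∈ Qr.head? := by
          rw [hρdef, getLast?_append_of_ne_nil _ (List.cons_ne_nil e Q),
            show (e :: Q) = [e] ++ Q from rfl,
            getLast?_append_of_ne_nil _ hQne, hQdef, getLast?_reverse] at hx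
          exact hx
        apply hQrsrc x
        cases Qr with
        | nil => exact absurd rfl hQrne
        | cons a t =>
          simp only [List.cons_append, List.head?_cons]
          simpa using h1x
  have hnot : ∀ τ ∈ K, ¬ FIncompat tl hd F ρ τ := by
    intro τ hτ hinc
    obtain ⟨P₁, Q₁, P₂, Q₂, h1, h2, hP₁, hQ₁, hP₂, hQ₂, ⟨v, hint, hv1, hv2⟩, hor⟩ := hinc
    rcases le_or_gt P₁.length P.length with hle | hgt
    · exact hPconf Q P₁ Q₁ τ P₂ Q₂ v hτ (by rw [← hρdef]; exact h1) h2
        hP₁ hQ₁ hP₂ hQ₂ hle hint hv1 hv2 hor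
    · have hτchain := (hKwalks τ hτ).1.2
      have hlen2 : Q₁.reverse.length ≤ Qr.length := by
        have hlenρ := congrArg List.length h1
        simp only [hρdef, List.length_append, List.length_cons] at hlenρ
        have hQlen : Q.length = Qr.length := by simp [hQdef]
        simp only [List.length_reverse]
        omega
      have hjρ : tl (Q₁.head hQ₁) = v := by
        have hch := hρchain
        rw [h1] at hch
        have hj := (chain'_append.mp hch).2.2 (P₁.getLast hP₁)
          (by simp [getLast?_eq_getLast hP₁]) (Q₁.head hQ₁)
          (by simp [head?_eq_head hQ₁])
        rw [← hj]
        exact hv1 _ (by simp [getLast?_eq_getLast hP₁])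
      have hjτ : tl (Q₂.head hQ₂) = v := by
        have hch := hτchain
        rw [h2] at hch
        have hj := (chain'_append.mp hch).2.2 (P₂.getLast hP₂)
          (by simp [getLast?_eq_getLast hP₂]) (Q₂.head hQ₂)
          (by simp [head?_eq_head hQ₂])
        rw [← hj]
        exact hv2 _ (by simp [getLast?_eq_getLast hP₂])
      have e1 : prefLt hd tl F.rev Q₁.reverse Q₂.reverse ↔ suffLt tl hd F Q₁ Q₂ := by
        rw [prefLt_rev F, List.reverse_reverse, List.reverse_reverse]
      have e1' : prefLt hd tl F.rev Q₂.reverse Q₁.reverse ↔ suffLt tl hd F Q₂ Q₁ := by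
        rw [prefLt_rev F, List.reverse_reverse, List.reverse_reverse]
      have e2 : suffLt hd tl F.rev P₂.reverse P₁.reverse ↔ prefLt tl hd F P₂ P₁ := by
        rw [suffLt_rev F, List.reverse_reverse, List.reverse_reverse]
      have e2' : suffLt hd tl F.rev P₁.reverse P₂.reverse ↔ prefLt tl hd F P₁ P₂ := by
        rw [suffLt_rev F, List.reverse_reverse, List.reverse_reverse]
      apply hQrconf P.reverse Q₁.reverse P₁.reverse τ.reverse Q₂.reverse P₂.reverse v
        (Set.mem_image_of_mem _ hτ)
        (by rw [show Qr ++ e :: P.reverse = ρ.reverse by simp [hρdef, hQdef], h1]; simp)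
        (by rw [h2]; simp)
        (by simpa using hQ₁) (by simpa using hP₁) (by simpa using hQ₂) (by simpa using hP₂)
        hlen2 (isInternal_rev.mpr hint)
      · intro a ha
        rw [getLast?_reverse] at ha
        have ha' : Q₁.head hQ₁ = a := by simpa [head?_eq_head hQ₁] using ha
        rw [← ha']
        exact hjρ
      · intro a ha
        rw [getLast?_reverse] at ha
        have ha' : Q₂.head hQ₂ = a := by simpa [head?_eq_head hQ₂] using ha
        rw [← ha']
        exact hjτ
      · rcases hor with ⟨hp, hs⟩ | ⟨hp, hs⟩
        · exact Or.inr ⟨e1'.mpr hs, e2'.mpr hp⟩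
        · exact Or.inl ⟨e1.mpr hs, e2.mpr hp⟩
  have hself : ¬ FIncompat tl hd F ρ ρ := fincompat_self hacyc hρchain
  have hclique : FClique tl hd F (insert ρ K) := by
    constructor
    · intro w hw
      rcases Set.mem_insert_iff.mp hw with rfl | hw
      · exact hρsrcsnk
      · exact hKwalks w hw
    · intro w hw w' hw'
      rcases Set.mem_insert_iff.mp hw with rfl | hw
      · rcases Set.mem_insert_iff.mp hw' with rfl | hw'
        · exact hself
        · exact hnot w' hw'
      · rcases Set.mem_insert_iff.mp hw' with rfl | hw'
        · exact fun h => hnot w hw (fincompat_symm h)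
        · exact hKcomp w hw w' hw'
  have hins := hmax (insert ρ K) hclique (Set.subset_insert ρ K)
  have hρK : ρ ∈ K := by rw [← hins]; exact Set.mem_insert ρ K
  exact ⟨ρ, hρK, by simp [hρdef]⟩

end PaperDKK
end
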